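/- arXiv:1111.3101 — 6 statements merged into one kernel-verified Lean document; each statement's English description precedes it below -/
import Mathlib

section
/- A quadratic stochastic operator with coefficients satisfying the Volterra condition P_{ijk} = 0 whenever k ∉ {i,j} can be written in the form (Vx)_k = x_k (1 + Σ_i a_{ki} x_i) on the simplex, where a_{ki} = 2 P_{kik} − 1 for i ≠ k, a_{kk} = 0, and the matrix (a_{ki}) is skew-symmetric with entries in [−1,1]. -/
theorem volterra_qso_canonical_form (m : ℕ) (P : Fin m → Fin m → Fin m → ℝ)
    (hnn : ∀ i j k, 0 ≤ P i j k)
    (hsymm : ∀ i j k, P i j k = P j i k)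
    (hsum : ∀ i j, ∑ k, P i j k = 1)
    (hvolt : ∀ i j k, k ≠ i → k ≠ j → P i j k = 0)
    (a : Fin m → Fin m → ℝ)
    (ha : ∀ k i, a k i = if i = k then 0 else 2 * P k i k - 1) :
    (∀ k i, a k i = -(a i k)) ∧ (∀ k i, |a k i| ≤ 1) ∧
    (∀ x : Fin m → ℝ, (∀ i, 0 ≤ x i) → ∑ i, x i = 1 →
      ∀ k, ∑ i, ∑ j, P i j k * x i * x j = x k * (1 + ∑ i, a k i * x i)) := by
  have hPkkk : ∀ k, P k k k = 1 := by
    intro k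
    have h := hsum k k
    rwa [Finset.sum_eq_single k (fun j _ hj => hvolt k k j hj hj) (by simp)] at h
  have hpair : ∀ k i, i ≠ k → P k i k + P k i i = 1 := by
    intro k i hik
    have h := hsum k i
    have hsub : ∑ j, P k i j = ∑ j ∈ ({k, i} : Finset (Fin m)), P k i j := by
      symm
      apply Finset.sum_subset (Finset.subset_univ _)
      intro j _ hj
      simp only [Finset.mem_insert, Finset.mem_singleton, not_or] at hj
      exact hvolt k i j hj.1 hj.2
    rw [hsub, Finset.sum_pair (Ne.symm hik)] at h
    exact h
  have hle : ∀ k i, i ≠ k → P k i k ≤ 1 := by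
    intro k i hik
    have := hpair k i hik
    have := hnn k i i
    linarith
  refine ⟨?_, ?_, ?_⟩
  · intro k i
    by_cases h : i = k
    · subst h; simp [ha]
    · rw [ha, ha, if_neg h, if_neg (Ne.symm h)]
      have h1 := hpair k i h
      have h2 : P i k i = P k i i := hsymm i k i
      linarith
  · intro k i
    by_cases h : i = k
    · subst h; simp [ha]
    · rw [ha, if_neg h, abs_le]
      have := hnn k i k
      have := hle k i h
      constructor <;> linarith
  · intro x hx hsx k
    have hP1 : P k k k = 1 := hPkkk k
    have step : ∀ i j, P i j k * x i * x j =
        (if i = k then P k j k * x k * x j else 0) +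
        (if j = k then P i k k * x i * x k else 0) -
        (if i = k then (if j = k then x k * x k else 0) else 0) := by
      intro i j
      by_cases hi : i = k <;> by_cases hj : j = k
      · subst hi; subst hj; simp [hP1]
      · subst hi; simp [hj]
      · subst hj; simp [hi]
      · rw [hvolt i j k (fun h => hi h.symm) (fun h => hj h.symm)]
        simp [hi, hj]
    have hL : ∑ i, ∑ j, P i j k * x i * x j =
        ∑ i, ∑ j, ((if i = k then P k j k * x k * x j else 0) +
          (if j = k then P i k k * x i * x k else 0) -
          (if i = k then (if j = k then x k * x k else 0) else 0)) :=
      Finset.sum_congr rfl (fun i _ => Finset.sum_congr rfl (fun j _ => step i j))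
    rw [hL]
    simp only [Finset.sum_sub_distrib, Finset.sum_add_distrib,
      Finset.sum_ite_eq', Finset.mem_univ, if_true, Finset.sum_ite_irrel,
      Finset.sum_const_zero]
    have hsym' : ∀ i, P i k k = P k i k := fun i => hsymm i k k
    simp_rw [hsym']
    have ha' : ∀ i, a k i * x i =
        (2 * P k i k - 1) * x i - (if i = k then (2 * P k i k - 1) * x i else 0) := by
      intro i
      rw [ha]
      by_cases h : i = k <;> simp [h]
    simp_rw [ha', Finset.sum_sub_distrib, Finset.sum_ite_eq', Finset.mem_univ, if_true, hP1]
    have e1 : ∑ j, P k j k * x k * x j = x k * ∑ j, P k j k * x j := by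
      rw [Finset.mul_sum]; exact Finset.sum_congr rfl (fun j _ => by ring)
    have e2 : ∑ i, P k i k * x i * x k = x k * ∑ i, P k i k * x i := by
      rw [Finset.mul_sum]; exact Finset.sum_congr rfl (fun i _ => by ring)
    have e3 : ∑ i, (2 * P k i k - 1) * x i = 2 * (∑ i, P k i k * x i) - 1 := by
      rw [Finset.mul_sum, ← hsx, ← Finset.sum_sub_distrib]
      exact Finset.sum_congr rfl (fun i _ => by rw [hsx]; ring)
    rw [e1, e2, e3]
    ring
end

section
/- For the Volterra operator V on S^2 given by V(x₁,x₂,x₃) = (x₁² + 2x₁x₂, x₂² + 2x₂x₃, x₃² + 2x₁x₃), the points (1,0,0), (0,1,0), (0,0,1), and (1/3,1/3,1/3) are fixed points, and these are the only fixed points of V in S². -/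
theorem fixed_points_of_counterexample_operator
    (V : ℝ × ℝ × ℝ → ℝ × ℝ × ℝ)
    (hV : ∀ x : ℝ × ℝ × ℝ, V x =
      (x.1^2 + 2*x.1*x.2.1, x.2.1^2 + 2*x.2.1*x.2.2, x.2.2^2 + 2*x.1*x.2.2)) :
    (∀ x : ℝ × ℝ × ℝ,
      (0 ≤ x.1 ∧ 0 ≤ x.2.1 ∧ 0 ≤ x.2.2 ∧ x.1 + x.2.1 + x.2.2 = 1) →
      (V x = x ↔ x = (1,0,0) ∨ x = (0,1,0) ∨ x = (0,0,1) ∨ x = (1/3,1/3,1/3))) := by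
  rintro ⟨a, b, c⟩ ⟨ha, hb, hc, hsum⟩
  rw [hV]
  simp only [Prod.mk.injEq, Prod.ext_iff] at *
  constructor
  · rintro ⟨e1, e2, e3⟩
    have h1 : a = 0 ∨ b = c := by
      rcases mul_eq_zero.mp (show a * (b - c) = 0 by nlinarith) with h | h
      · exact Or.inl h
      · exact Or.inr (by linarith)
    have h2 : b = 0 ∨ c = a := by
      rcases mul_eq_zero.mp (show b * (c - a) = 0 by nlinarith) with h | h
      · exact Or.inl h
      · exact Or.inr (by linarith)
    have h3 : c = 0 ∨ a = b := by
      rcases mul_eq_zero.mp (show c * (a - b) = 0 by nlinarith) with h | h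
      · exact Or.inl h
      · exact Or.inr (by linarith)
    rcases h1 with h1 | h1 <;> rcases h2 with h2 | h2 <;> rcases h3 with h3 | h3
    · exact Or.inr (Or.inr (Or.inl (by constructor <;> [exact h1; constructor <;> linarith])))
    · exact Or.inr (Or.inr (Or.inl (by constructor <;> [exact h1; constructor <;> linarith])))
    · exact Or.inr (Or.inl (by constructor <;> [exact h1; constructor <;> linarith]))
    · exfalso; linarith
    · exact Or.inl (by constructor <;> [linarith; constructor <;> linarith])
    · exfalso; linarith
    · exfalso; linarith
    · exact Or.inr (Or.inr (Or.inr (by constructor <;> [linarith; constructor <;> linarith])))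
  · rintro (⟨h1, h2, h3⟩ | ⟨h1, h2, h3⟩ | ⟨h1, h2, h3⟩ | ⟨h1, h2, h3⟩) <;>
      subst h1 <;> subst h2 <;> subst h3 <;> norm_num
end

section
/- The operator V(x₁,x₂,x₃) = (x₁² + 2x₁x₂, x₂² + 2x₂x₃, x₃² + 2x₁x₃) on S² has no periodic point of period 2, i.e., V(V(x)) = x implies V(x) = x for all x ∈ S². -/
theorem no_period_two_points_of_counterexample_operator
    (V : ℝ × ℝ × ℝ → ℝ × ℝ × ℝ)
    (hV : ∀ x : ℝ × ℝ × ℝ, V x =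
      (x.1^2 + 2*x.1*x.2.1, x.2.1^2 + 2*x.2.1*x.2.2, x.2.2^2 + 2*x.1*x.2.2)) :
    ∀ x : ℝ × ℝ × ℝ,
      (0 ≤ x.1 ∧ 0 ≤ x.2.1 ∧ 0 ≤ x.2.2 ∧ x.1 + x.2.1 + x.2.2 = 1) →
      V (V x) = x → V x = x := by
  intro x hx hper
  obtain ⟨p, q, r⟩ := x
  obtain ⟨hp, hq, hr, hs⟩ := hx
  dsimp only at hp hq hr hs
  simp only [hV, Prod.mk.injEq] at hper ⊢
  obtain ⟨e1, e2, e3⟩ := hper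
  rcases eq_or_lt_of_le hp with hp0 | hp0
  · -- p = 0 : then r^4 = r, so r = 0 or r = 1
    subst hp0
    have hr4 : r * (r - 1) * (r^2 + r + 1) = 0 := by linear_combination e3
    have hr01 : r = 0 ∨ r = 1 := by
      rcases mul_eq_zero.mp hr4 with h | h
      · rcases mul_eq_zero.mp h with h' | h'
        · exact Or.inl h'
        · exact Or.inr (by linarith)
      · exfalso; nlinarith [sq_nonneg (2*r + 1)]
    rcases hr01 with rfl | rfl
    · have hq1 : q = 1 := by linarith
      subst hq1; norm_num
    · have hq1 : q = 0 := by linarith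
      subst hq1; norm_num
  rcases eq_or_lt_of_le hq with hq0 | hq0
  · -- q = 0 : then p^4 = p
    subst hq0
    have hp4 : p * (p - 1) * (p^2 + p + 1) = 0 := by linear_combination e1
    have hp01 : p = 0 ∨ p = 1 := by
      rcases mul_eq_zero.mp hp4 with h | h
      · rcases mul_eq_zero.mp h with h' | h'
        · exact Or.inl h'
        · exact Or.inr (by linarith)
      · exfalso; nlinarith [sq_nonneg (2*p + 1)]
    rcases hp01 with rfl | rfl
    · have hr1 : r = 1 := by linarith
      subst hr1; norm_num
    · have hr1 : r = 0 := by linarith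
      subst hr1; norm_num
  rcases eq_or_lt_of_le hr with hr0 | hr0
  · -- r = 0 : then q^4 = q
    subst hr0
    have hq4 : q * (q - 1) * (q^2 + q + 1) = 0 := by linear_combination e2
    have hq01 : q = 0 ∨ q = 1 := by
      rcases mul_eq_zero.mp hq4 with h | h
      · rcases mul_eq_zero.mp h with h' | h'
        · exact Or.inl h'
        · exact Or.inr (by linarith)
      · exfalso; nlinarith [sq_nonneg (2*q + 1)]
    rcases hq01 with rfl | rfl
    · have hp1 : p = 1 := by linarith
      subst hp1; norm_num
    · have hp1 : p = 0 := by linarith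
      subst hp1; norm_num
  -- interior case
  obtain ⟨A, hA_def⟩ : ∃ t : ℝ, t = p + 2*q := ⟨_, rfl⟩
  obtain ⟨B, hB_def⟩ : ∃ t : ℝ, t = q + 2*r := ⟨_, rfl⟩
  obtain ⟨C, hC_def⟩ : ∃ t : ℝ, t = r + 2*p := ⟨_, rfl⟩
  obtain ⟨A', hA'_def⟩ : ∃ t : ℝ, t = (p^2 + 2*p*q) + 2*(q^2 + 2*q*r) := ⟨_, rfl⟩
  obtain ⟨B', hB'_def⟩ : ∃ t : ℝ, t = (q^2 + 2*q*r) + 2*(r^2 + 2*p*r) := ⟨_, rfl⟩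
  obtain ⟨C', hC'_def⟩ : ∃ t : ℝ, t = (r^2 + 2*p*r) + 2*(p^2 + 2*p*q) := ⟨_, rfl⟩
  have hA : 0 < A := by rw [hA_def]; linarith
  have hB : 0 < B := by rw [hB_def]; linarith
  have hC : 0 < C := by rw [hC_def]; linarith
  have h1 : A * A' = 1 :=
    mul_left_cancel₀ (ne_of_gt hp0) (show p * (A * A') = p * 1 by
      rw [hA_def, hA'_def]; linear_combination e1)
  have h2 : B * B' = 1 :=
    mul_left_cancel₀ (ne_of_gt hq0) (show q * (B * B') = q * 1 by
      rw [hB_def, hB'_def]; linear_combination e2)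
  have h3 : C * C' = 1 :=
    mul_left_cancel₀ (ne_of_gt hr0) (show r * (C * C') = r * 1 by
      rw [hC_def, hC'_def]; linear_combination e3)
  have h4 : A' + B' + C' = 3 := by
    rw [hA'_def, hB'_def, hC'_def]; linear_combination 3 * (p + q + r + 1) * hs
  have hsum3 : A + B + C = 3 := by rw [hA_def, hB_def, hC_def]; linear_combination 3 * hs
  have hS2 : B*C + A*C + A*B = 3 * (A*B*C) := by
    linear_combination A*B*C*h4 - B*C*h1 - A*C*h2 - A*B*h3
  have hS2pos : 0 < B*C + A*C + A*B := by positivity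
  have hnewton : 3*(A+B+C)*(A*B*C) ≤ (B*C + A*C + A*B)^2 := by
    nlinarith [sq_nonneg (A*B - B*C), sq_nonneg (B*C - A*C), sq_nonneg (A*B - A*C)]
  clear e1 e2 e3 hA'_def hB'_def hC'_def h4
  have hge : 3 ≤ B*C + A*C + A*B := by nlinarith [hnewton, hS2pos, hS2, hsum3]
  have h9 : (A+B+C)^2 = 9 := by rw [hsum3]; norm_num
  have hsq : (A-1)^2 + (B-1)^2 + (C-1)^2 = 6 - 2*(B*C + A*C + A*B) := by
    linear_combination h9 - 2*hsum3
  have hsq' : (A-1)^2 + (B-1)^2 + (C-1)^2 ≤ 0 := by rw [hsq]; linarith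
  have hA1 : A = 1 := by
    have h := pow_eq_zero_iff (n := 2) two_ne_zero |>.mp
      (le_antisymm (by linarith [sq_nonneg (B-1), sq_nonneg (C-1)]) (sq_nonneg (A-1)))
    linarith [h]
  have hB1 : B = 1 := by
    have h := pow_eq_zero_iff (n := 2) two_ne_zero |>.mp
      (le_antisymm (by linarith [sq_nonneg (A-1), sq_nonneg (C-1)]) (sq_nonneg (B-1)))
    linarith [h]
  have hp3 : p = 1/3 := by rw [hA_def] at hA1; rw [hB_def] at hB1; linarith
  have hq3 : q = 1/3 := by rw [hA_def] at hA1; rw [hB_def] at hB1; linarith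
  have hr3 : r = 1/3 := by rw [hA_def] at hA1; rw [hB_def] at hB1; linarith
  subst hp3 hq3 hr3
  norm_num
end

section
/- If a continuous map f of a compact interval [a,b] ⊂ ℝ into itself has no periodic point of period 2 (i.e., f(f(x)) = x implies f(x) = x), then for every x ∈ [a,b] the sequence of iterates fⁿ(x) converges to a fixed point of f. -/
namespace NP2


lemma fixed_of_ge_le {φ : ℝ → ℝ} {u v : ℝ} (huv : u ≤ v)
    (hφ : ContinuousOn φ (Set.Icc u v))
    (h1 : u ≤ φ u) (h2 : φ v ≤ v) : ∃ p ∈ Set.Icc u v, φ p = p := by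
  have hψ : ContinuousOn (fun t => φ t - t) (Set.Icc u v) := hφ.sub continuousOn_id
  have h0 : (0:ℝ) ∈ Set.Icc (φ v - v) (φ u - u) := ⟨by linarith, by linarith⟩
  obtain ⟨p, hp, hp0⟩ := intermediate_value_Icc' huv hψ h0
  exact ⟨p, hp, by simpa [sub_eq_zero] using hp0⟩

lemma fixed_of_le_ge {φ : ℝ → ℝ} {u v : ℝ} (huv : u ≤ v)
    (hφ : ContinuousOn φ (Set.Icc u v))
    (h1 : φ u ≤ u) (h2 : v ≤ φ v) : ∃ p ∈ Set.Icc u v, φ p = p := by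
  have hψ : ContinuousOn (fun t => φ t - t) (Set.Icc u v) := hφ.sub continuousOn_id
  have h0 : (0:ℝ) ∈ Set.Icc (φ u - u) (φ v - v) := ⟨by linarith, by linarith⟩
  obtain ⟨p, hp, hp0⟩ := intermediate_value_Icc huv hψ h0
  exact ⟨p, hp, by simpa [sub_eq_zero] using hp0⟩

lemma exists_greatest_zero {g : ℝ → ℝ} {u v : ℝ}
    (hg : ContinuousOn g (Set.Icc u v)) (hne : ∃ w ∈ Set.Icc u v, g w = 0) :
    ∃ c ∈ Set.Icc u v, g c = 0 ∧ ∀ w ∈ Set.Icc u v, g w = 0 → w ≤ c := by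
  have hclosed : IsClosed (Set.Icc u v ∩ g ⁻¹' {0}) :=
    hg.preimage_isClosed_of_isClosed isClosed_Icc isClosed_singleton
  have hcomp : IsCompact (Set.Icc u v ∩ g ⁻¹' {0}) :=
    isCompact_Icc.of_isClosed_subset hclosed Set.inter_subset_left
  obtain ⟨w, hw, he⟩ := hne
  obtain ⟨c, hcS, hub⟩ := hcomp.exists_isGreatest ⟨w, hw, by simpa using he⟩
  exact ⟨c, hcS.1, by simpa using hcS.2, fun w' hw' he' => hub ⟨hw', by simpa using he'⟩⟩

lemma exists_least_zero {g : ℝ → ℝ} {u v : ℝ}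
    (hg : ContinuousOn g (Set.Icc u v)) (hne : ∃ w ∈ Set.Icc u v, g w = 0) :
    ∃ c ∈ Set.Icc u v, g c = 0 ∧ ∀ w ∈ Set.Icc u v, g w = 0 → c ≤ w := by
  have hclosed : IsClosed (Set.Icc u v ∩ g ⁻¹' {0}) :=
    hg.preimage_isClosed_of_isClosed isClosed_Icc isClosed_singleton
  have hcomp : IsCompact (Set.Icc u v ∩ g ⁻¹' {0}) :=
    isCompact_Icc.of_isClosed_subset hclosed Set.inter_subset_left
  obtain ⟨w, hw, he⟩ := hne
  obtain ⟨c, hcS, hub⟩ := hcomp.exists_isLeast ⟨w, hw, by simpa using he⟩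
  exact ⟨c, hcS.1, by simpa using hcS.2, fun w' hw' he' => hub ⟨hw', by simpa using he'⟩⟩


lemma endgame (a b : ℝ) (hab : a ≤ b) (f : ℝ → ℝ)
    (hc : ContinuousOn f (Set.Icc a b))
    (hmaps : Set.MapsTo f (Set.Icc a b) (Set.Icc a b))
    (hnp2 : ∀ x ∈ Set.Icc a b, f (f x) = x → f x = x)
    (hc2 : ContinuousOn (f ∘ f) (Set.Icc a b))
    (hm2 : Set.MapsTo (f ∘ f) (Set.Icc a b) (Set.Icc a b))
    {y α c : ℝ} (hy : y ∈ Set.Icc a b) (hαI : α ∈ Set.Icc a b) (hcI : c ∈ Set.Icc a b)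
    (hfα : f α = α) (hfc : f c = c) (hαy : α < y) (hyc : y < c)
    (hkneg : ∀ t, α < t → t < c → f (f t) < t)
    (hgpos : ∀ t, α < t → t < c → t < f t)
    (hjump : ∀ t, α < t → t < c → c < f t)
    (hfreeF : ∀ t, α < t → t < c → f t ≠ t) : False := by
  classical
  set z : ℕ → ℝ := fun r => (f ∘ f)^[r] y with hz
  have hzI : ∀ r, z r ∈ Set.Icc a b := fun r => hm2.iterate r hy
  have hzsucc : ∀ r, z (r + 1) = f (f (z r)) := by
    intro r
    simp only [hz, Function.iterate_succ_apply', Function.comp_apply]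
  by_cases hall : ∀ r, α < z r ∧ z r < c
  · -- decreasing orbit converging to α, contradiction via hjump
    have hdec : ∀ r, z (r + 1) < z r := fun r => by
      rw [hzsucc r]; exact hkneg (z r) (hall r).1 (hall r).2
    have hanti : Antitone z := antitone_nat_of_succ_le (fun n => (hdec n).le)
    have hbdd : BddBelow (Set.range z) := ⟨α, by rintro w ⟨r, rfl⟩; exact (hall r).1.le⟩
    have hlim : Filter.Tendsto z Filter.atTop (nhds (⨅ r, z r)) := tendsto_atTop_ciInf hanti hbdd
    set lam := ⨅ r, z r with hlam
    have hlamle : ∀ r, lam ≤ z r := fun r => ciInf_le hbdd r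
    have hlamge : α ≤ lam := le_ciInf (fun r => (hall r).1.le)
    have hlamI : lam ∈ Set.Icc a b := ⟨hαI.1.trans hlamge, (hlamle 0).trans (hzI 0).2⟩
    have hzin : Filter.Tendsto z Filter.atTop (nhdsWithin lam (Set.Icc a b)) :=
      tendsto_nhdsWithin_of_tendsto_nhds_of_eventually_within z hlim
        (Filter.Eventually.of_forall hzI)
    have h1 : Filter.Tendsto (fun r => z (r + 1)) Filter.atTop (nhds ((f ∘ f) lam)) := by
      have := (hc2 lam hlamI).tendsto.comp hzin
      have he : (fun r => z (r + 1)) = (f ∘ f) ∘ z := funext fun r => (hzsucc r)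
      rw [he]; exact this
    have h2 : Filter.Tendsto (fun r => z (r + 1)) Filter.atTop (nhds lam) :=
      hlim.comp (Filter.tendsto_add_atTop_nat 1)
    have h3 : f (f lam) = lam := tendsto_nhds_unique h1 h2
    have hflam : f lam = lam := hnp2 lam hlamI h3
    have hlamα : lam = α := by
      rcases eq_or_lt_of_le hlamge with he | hlt'
      · exact he.symm
      · exact absurd hflam (hfreeF lam hlt' ((hlamle 0).trans_lt (hall 0).2))
    have h4 : Filter.Tendsto (fun r => f (z r)) Filter.atTop (nhds (f lam)) := by
      have := (hc lam hlamI).tendsto.comp hzin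
      exact this
    have h5 : c ≤ f lam := ge_of_tendsto' h4 (fun r => (hjump (z r) (hall r).1 (hall r).2).le)
    rw [hflam, hlamα] at h5
    linarith
  · -- escape: first r with z r outside (α, c)
    have hex : ∃ r, ¬(α < z r ∧ z r < c) := by
      push_neg at hall
      obtain ⟨r, hr⟩ := hall
      exact ⟨r, fun hh => absurd (hr hh.1) (not_le.2 hh.2)⟩
    set r0 := Nat.find hex with hr0
    have hr0spec : ¬(α < z r0 ∧ z r0 < c) := Nat.find_spec hex
    have hr0min : ∀ i, i < r0 → α < z i ∧ z i < c := fun i hi =>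
      not_not.1 (Nat.find_min hex hi)
    have hr0pos : r0 ≠ 0 := by
      intro h0
      apply hr0spec
      rw [h0]
      exact ⟨hαy, hyc⟩
    set τ := z (r0 - 1) with hτ
    have hτP : α < τ ∧ τ < c := hr0min _ (Nat.pred_lt hr0pos)
    have hτI : τ ∈ Set.Icc a b := hzI _
    have hwz : z r0 = f (f τ) := by
      rw [hτ, ← hzsucc]
      congr 1
      omega
    have hwτ : f (f τ) < τ := hkneg τ hτP.1 hτP.2
    have hwα : f (f τ) ≤ α := by
      by_contra h'
      push_neg at h'
      exact hr0spec ⟨by rw [hwz]; exact h', by rw [hwz]; linarith [hτP.2]⟩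
    set β := f τ with hβdef
    have hβ : c < β := hjump τ hτP.1 hτP.2
    have hβI : β ∈ Set.Icc a b := hmaps hτI
    have hτβ : τ ≤ β := by linarith [hτP.2]
    -- p with f p = τ on [α, τ]
    have hsubατ : Set.Icc α τ ⊆ Set.Icc a b := Set.Icc_subset_Icc hαI.1 hτI.2
    have hmemτ : τ ∈ Set.Icc (f α) (f τ) := by
      rw [hfα]
      exact ⟨hτP.1.le, hτβ⟩
    obtain ⟨p, hpmem, hfp⟩ := intermediate_value_Icc hτP.1.le (hc.mono hsubατ) hmemτ
    have hpI : p ∈ Set.Icc a b := hsubατ hpmem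
    -- u' : greatest preimage of τ in [p, τ]
    have hsubpτ : Set.Icc p τ ⊆ Set.Icc a b := Set.Icc_subset_Icc hpI.1 hτI.2
    obtain ⟨u', hu'mem, hu'0, hu'max⟩ := exists_greatest_zero
      (g := fun w => f w - τ) ((hc.mono hsubpτ).sub continuousOn_const)
      ⟨p, ⟨le_rfl, hpmem.2⟩, by simp [hfp]⟩
    have hfu' : f u' = τ := by have := hu'0; simpa [sub_eq_zero] using this
    -- v' : least preimage of β in [u', τ]
    have hsubu'τ : Set.Icc u' τ ⊆ Set.Icc a b := Set.Icc_subset_Icc (hpI.1.trans hu'mem.1) hτI.2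
    obtain ⟨v', hv'mem, hv'0, hv'min⟩ := exists_least_zero
      (g := fun w => f w - β) ((hc.mono hsubu'τ).sub continuousOn_const)
      ⟨τ, ⟨hu'mem.2, le_rfl⟩, by simp [hβdef]⟩
    have hfv' : f v' = β := by have := hv'0; simpa [sub_eq_zero] using this
    have hu'v' : u' < v' := by
      rcases eq_or_lt_of_le hv'mem.1 with he | h
      · rw [he, hfv'] at hfu'; linarith [hτP.2, hβ, hfu']
      · exact h
    have hsubuv : Set.Icc u' v' ⊆ Set.Icc a b :=
      Set.Icc_subset_Icc (hpI.1.trans hu'mem.1) (hv'mem.2.trans hτI.2)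
    -- image bounds on [u', v']
    have hE1 : ∀ w ∈ Set.Icc u' v', f w ≤ β := by
      intro w hw
      by_contra h'
      push_neg at h'
      have hwv : w < v' := lt_of_le_of_ne hw.2 (fun he => by rw [he, hfv'] at h'; exact lt_irrefl _ h')
      have hmem' : β ∈ Set.Icc (f u') (f w) := ⟨by rw [hfu']; exact hτβ, h'.le⟩
      have hsub' : Set.Icc u' w ⊆ Set.Icc a b :=
        Set.Icc_subset_Icc (hpI.1.trans hu'mem.1) ((hw.2.trans hv'mem.2).trans hτI.2)
      obtain ⟨w', hw'mem, hfw'⟩ := intermediate_value_Icc hw.1 (hc.mono hsub') hmem'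
      have := hv'min w' ⟨hw'mem.1, hw'mem.2.trans (hwv.le.trans hv'mem.2)⟩ (by simp [hfw'])
      linarith [hw'mem.2]
    have hE2 : ∀ w ∈ Set.Icc u' v', τ ≤ f w := by
      intro w hw
      by_contra h'
      push_neg at h'
      have hwu : u' < w := lt_of_le_of_ne hw.1 (fun he => by rw [← he, hfu'] at h'; exact lt_irrefl _ h')
      have hmem' : τ ∈ Set.Icc (f w) (f v') := ⟨h'.le, by rw [hfv']; exact hτβ⟩
      have hsub' : Set.Icc w v' ⊆ Set.Icc a b :=
        Set.Icc_subset_Icc (hpI.1.trans (hu'mem.1.trans hw.1)) (hv'mem.2.trans hτI.2)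
      obtain ⟨w', hw'mem, hfw'⟩ := intermediate_value_Icc hw.2 (hc.mono hsub') hmem'
      have := hu'max w' ⟨hu'mem.1.trans (hw.1.trans hw'mem.1), hw'mem.2.trans hv'mem.2⟩ (by simp [hfw'])
      linarith [hw'mem.1]
    -- pull back u' and v' through [τ, β] then [u', v']
    have hsubτβ : Set.Icc τ β ⊆ Set.Icc a b := Set.Icc_subset_Icc hτI.1 hβI.2
    have hαu' : α ≤ u' := hpmem.1.trans hu'mem.1
    have hq1mem : u' ∈ Set.Icc (f β) (f τ) := by
      constructor
      · calc f β ≤ α := hwα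
          _ ≤ u' := hαu'
      · calc u' ≤ τ := hu'mem.2
          _ ≤ f τ := hτβ
    obtain ⟨q1, hq1m, hfq1⟩ := intermediate_value_Icc' hτβ (hc.mono hsubτβ) hq1mem
    have hp1mem : q1 ∈ Set.Icc (f u') (f v') := by rw [hfu', hfv']; exact hq1m
    obtain ⟨p1, hp1m, hfp1⟩ := intermediate_value_Icc hu'v'.le (hc.mono hsubuv) hp1mem
    have hk1 : f (f p1) = u' := by rw [hfp1, hfq1]
    have hq2mem : v' ∈ Set.Icc (f β) (f τ) := by
      constructor
      · calc f β ≤ α := hwα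
          _ ≤ u' := hαu'
          _ ≤ v' := hu'v'.le
      · calc v' ≤ τ := hv'mem.2
          _ ≤ f τ := hτβ
    obtain ⟨q2, hq2m, hfq2⟩ := intermediate_value_Icc' hτβ (hc.mono hsubτβ) hq2mem
    have hp2mem : q2 ∈ Set.Icc (f u') (f v') := by rw [hfu', hfv']; exact hq2m
    obtain ⟨p2, hp2m, hfp2⟩ := intermediate_value_Icc hu'v'.le (hc.mono hsubuv) hp2mem
    have hk2 : f (f p2) = v' := by rw [hfp2, hfq2]
    have h2p1 : f (f p1) ≤ p1 := by rw [hk1]; exact hp1m.1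
    have h2p2 : p2 ≤ f (f p2) := by rw [hk2]; exact hp2m.2
    -- fixed point of f ∘ f between p1 and p2
    have hqex : ∃ q ∈ Set.Icc u' v', f (f q) = q := by
      rcases le_total p1 p2 with hor | hor
      · obtain ⟨q, hqm, hq⟩ := fixed_of_le_ge (φ := f ∘ f) hor
          (hc2.mono ((Set.Icc_subset_Icc hp1m.1 hp2m.2).trans hsubuv)) h2p1 h2p2
        exact ⟨q, ⟨hp1m.1.trans hqm.1, hqm.2.trans hp2m.2⟩, hq⟩
      · obtain ⟨q, hqm, hq⟩ := fixed_of_ge_le (φ := f ∘ f) hor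
          (hc2.mono ((Set.Icc_subset_Icc hp2m.1 hp1m.2).trans hsubuv)) h2p2 h2p1
        exact ⟨q, ⟨hp2m.1.trans hqm.1, hqm.2.trans hp1m.2⟩, hq⟩
    obtain ⟨q, hqm, hq2fix⟩ := hqex
    have hqI : q ∈ Set.Icc a b := hsubuv hqm
    have hqfix : f q = q := hnp2 q hqI hq2fix
    have h5 : τ ≤ f q := hE2 q hqm
    rw [hqfix] at h5
    have h6 : q ≤ τ := hqm.2.trans hv'mem.2
    have hqτ : q = τ := le_antisymm h6 h5
    rw [hqτ] at hqfix
    -- f τ = τ but f τ = β > c > τ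
    rw [hβdef, hqfix] at hβ
    linarith [hτP.2]

lemma sign_pos (a b : ℝ) (hab : a ≤ b) (f : ℝ → ℝ)
    (hc : ContinuousOn f (Set.Icc a b))
    (hmaps : Set.MapsTo f (Set.Icc a b) (Set.Icc a b))
    (hnp2 : ∀ x ∈ Set.Icc a b, f (f x) = x → f x = x)
    {y : ℝ} (hy : y ∈ Set.Icc a b) (hlt : y < f y) : y < f (f y) := by
  classical
  by_contra hcon
  push_neg at hcon
  have hne0 : f (f y) ≠ y := fun h => absurd (hnp2 y hy h) (ne_of_gt hlt)
  have hk : f (f y) < y := lt_of_le_of_ne hcon hne0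
  have hc2 : ContinuousOn (f ∘ f) (Set.Icc a b) := hc.comp hc hmaps
  have hm2 : Set.MapsTo (f ∘ f) (Set.Icc a b) (Set.Icc a b) := hmaps.comp hmaps
  have hay : a ≤ y := hy.1
  have hyb : y ≤ b := hy.2
  -- α : greatest fixed point of f ∘ f in [a, y]
  have hsub1 : Set.Icc a y ⊆ Set.Icc a b := Set.Icc_subset_Icc le_rfl hyb
  have hnea : ∃ p ∈ Set.Icc a y, (fun t => f (f t) - t) p = 0 := by
    obtain ⟨p, hp, he⟩ := fixed_of_ge_le (φ := f ∘ f) hay (hc2.mono hsub1)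
      (hm2 (Set.left_mem_Icc.2 hab)).1 hk.le
    exact ⟨p, hp, by simpa [sub_eq_zero] using he⟩
  have hcont2' : ContinuousOn (fun t => f (f t) - t) (Set.Icc a y) :=
    ((hc2.mono hsub1).sub continuousOn_id)
  obtain ⟨α, hαmem, hα0, hαmax⟩ := exists_greatest_zero hcont2' hnea
  have hα2 : f (f α) = α := by
    have := hα0; simpa [sub_eq_zero] using this
  have hαI : α ∈ Set.Icc a b := hsub1 hαmem
  have hfα : f α = α := hnp2 α hαI hα2
  have hαy : α < y := lt_of_le_of_ne hαmem.2 (fun h => by rw [h] at hα2; exact hne0 hα2)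
  -- c : least fixed point of f in [y, b]
  have hsub2 : Set.Icc y b ⊆ Set.Icc a b := Set.Icc_subset_Icc hay le_rfl
  have hnec : ∃ p ∈ Set.Icc y b, (fun t => f t - t) p = 0 := by
    obtain ⟨p, hp, he⟩ := fixed_of_ge_le (φ := f) hyb (hc.mono hsub2)
      hlt.le (hmaps (Set.right_mem_Icc.2 hab)).2
    exact ⟨p, hp, by simpa [sub_eq_zero] using he⟩
  obtain ⟨c, hcmem, hc0, hcmin⟩ := exists_least_zero ((hc.mono hsub2).sub continuousOn_id) hnec
  have hfc : f c = c := by have := hc0; simpa [sub_eq_zero] using this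
  have hcI : c ∈ Set.Icc a b := hsub2 hcmem
  have hyc : y < c := lt_of_le_of_ne hcmem.1 (fun h => by rw [← h] at hfc; exact (ne_of_gt hlt) hfc)
  -- no fixed points in (α, c)
  have hfreeF : ∀ t, α < t → t < c → f t ≠ t := by
    intro t h1 h2 heq
    have htI : t ∈ Set.Icc a b := ⟨hαI.1.trans h1.le, h2.le.trans hcI.2⟩
    rcases le_or_gt t y with hty | hty
    · have : t ≤ α := hαmax t ⟨htI.1, hty⟩ (by simp [heq, sub_eq_zero])
      linarith
    · have : c ≤ t := hcmin t ⟨hty.le, htI.2⟩ (by simp [heq, sub_eq_zero])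
      linarith
  have hfree2 : ∀ t, α < t → t < c → f (f t) ≠ t := by
    intro t h1 h2 heq
    have htI : t ∈ Set.Icc a b := ⟨hαI.1.trans h1.le, h2.le.trans hcI.2⟩
    exact hfreeF t h1 h2 (hnp2 t htI heq)
  -- f (f t) < t on (α, c)
  have hkneg : ∀ t, α < t → t < c → f (f t) < t := by
    intro t h1 h2
    have htI : t ∈ Set.Icc a b := ⟨hαI.1.trans h1.le, h2.le.trans hcI.2⟩
    by_contra h'
    push_neg at h'
    have hlt' : t < f (f t) := lt_of_le_of_ne h' (fun h => (hfree2 t h1 h2) h.symm)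
    rcases lt_trichotomy t y with hty | hty | hty
    · obtain ⟨p, hp, he⟩ := fixed_of_ge_le (φ := f ∘ f) hty.le
        (hc2.mono (Set.Icc_subset_Icc htI.1 hyb)) hlt'.le hk.le
      exact hfree2 p (h1.trans_le hp.1) (lt_of_le_of_lt hp.2 hyc) he
    · rw [hty] at hlt'; linarith
    · obtain ⟨p, hp, he⟩ := fixed_of_le_ge (φ := f ∘ f) hty.le
        (hc2.mono (Set.Icc_subset_Icc hay htI.2)) hk.le hlt'.le
      exact hfree2 p (hαy.trans_le hp.1) (lt_of_le_of_lt hp.2 h2) he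
  -- t < f t on (α, c)
  have hgpos : ∀ t, α < t → t < c → t < f t := by
    intro t h1 h2
    have htI : t ∈ Set.Icc a b := ⟨hαI.1.trans h1.le, h2.le.trans hcI.2⟩
    by_contra h'
    push_neg at h'
    have hlt' : f t < t := lt_of_le_of_ne h' (hfreeF t h1 h2)
    rcases lt_trichotomy t y with hty | hty | hty
    · obtain ⟨p, hp, he⟩ := fixed_of_le_ge (φ := f) hty.le
        (hc.mono (Set.Icc_subset_Icc htI.1 hyb)) hlt'.le hlt.le
      exact hfreeF p (h1.trans_le hp.1) (lt_of_le_of_lt hp.2 hyc) he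
    · rw [hty] at hlt'; linarith
    · obtain ⟨p, hp, he⟩ := fixed_of_ge_le (φ := f) hty.le
        (hc.mono (Set.Icc_subset_Icc hay htI.2)) hlt.le hlt'.le
      exact hfreeF p (hαy.trans_le hp.1) (lt_of_le_of_lt hp.2 h2) he
  -- c < f t on (α, c)
  have hjump : ∀ t, α < t → t < c → c < f t := by
    intro t h1 h2
    by_contra h'
    push_neg at h'
    have hft : t < f t := hgpos t h1 h2
    rcases eq_or_lt_of_le h' with he | hlt'
    · have : f (f t) = c := by rw [he, hfc]
      have := hkneg t h1 h2
      linarith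
    · have h3 : α < f t := h1.trans hft
      have := hgpos (f t) h3 hlt'
      have := hkneg t h1 h2
      linarith
  exact endgame a b hab f hc hmaps hnp2 hc2 hm2 hy hαI hcI hfα hfc hαy hyc hkneg hgpos hjump hfreeF

lemma stays_above (a b : ℝ) (hab : a ≤ b) (f : ℝ → ℝ)
    (hc : ContinuousOn f (Set.Icc a b))
    (hmaps : Set.MapsTo f (Set.Icc a b) (Set.Icc a b))
    (hnp2 : ∀ x ∈ Set.Icc a b, f (f x) = x → f x = x)
    {y : ℝ} (hy : y ∈ Set.Icc a b) (h : y < f y) :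
    ∀ n, 1 ≤ n → y < f^[n] y := by
  classical
  by_contra hcon
  push_neg at hcon
  obtain ⟨n, hn1, hnle⟩ := hcon
  have hex : ∃ m, 1 ≤ m ∧ f^[m] y ≤ y := ⟨n, hn1, hnle⟩
  set m := Nat.find hex with hmdef
  have hPm : 1 ≤ m ∧ f^[m] y ≤ y := Nat.find_spec hex
  obtain ⟨hm1, hmle⟩ := hPm
  have hmin : ∀ i, 1 ≤ i → i < m → y < f^[i] y := fun i h1 h2 =>
    lt_of_not_ge (fun hle => Nat.find_min hex h2 ⟨h1, hle⟩)
  set Y : ℕ → ℝ := fun i => f^[i] y with hYdef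
  have hminY : ∀ i, 1 ≤ i → i < m → y < Y i := hmin
  have hYI : ∀ i, Y i ∈ Set.Icc a b := fun i => hmaps.iterate i hy
  have hY0 : Y 0 = y := rfl
  have hYs : ∀ i, Y (i + 1) = f (Y i) := fun i => Function.iterate_succ_apply' f i y
  have hmne1 : m ≠ 1 := by
    intro he
    rw [he] at hmle
    simp only [Function.iterate_one] at hmle
    linarith
  have hmne2 : m ≠ 2 := by
    intro he
    rw [he] at hmle
    have h2 : f^[2] y = f (f y) := by
      simp [Function.iterate_succ_apply']
    rw [h2] at hmle
    have := sign_pos a b hab f hc hmaps hnp2 hy h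
    linarith
  have hm3 : 3 ≤ m := by omega
  have hmle' : Y m ≤ y := hmle
  have hfrozen : ∀ i, i < m → f (Y i) ≠ Y i := by
    intro i him heq
    have hiter : Y m = Y i := by
      show f^[m] y = Y i
      have h1 : f^[m] y = f^[m - i] (f^[i] y) := by
        rw [← Function.iterate_add_apply]
        congr 1
        omega
      rw [h1]
      exact Function.iterate_fixed heq (m - i)
    rcases Nat.eq_zero_or_pos i with h0 | h0
    · rw [h0] at heq
      rw [hY0] at heq
      exact (ne_of_gt h) heq
    · have := hminY i h0 him
      rw [← hiter] at this
      linarith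
  have hdic : ∀ i, i < m → Y i < f (Y i) ∨ f (Y i) < Y i := fun i him =>
    lt_or_gt_of_ne (Ne.symm (hfrozen i him))
  set j := Nat.findGreatest (fun i => Y i < f (Y i)) (m - 2) with hjdef
  have hjP : Y j < f (Y j) :=
    Nat.findGreatest_spec (P := fun i => Y i < f (Y i)) (Nat.zero_le (m - 2))
      (show Y 0 < f (Y 0) from h)
  have hjle : j ≤ m - 2 := Nat.findGreatest_le (m - 2)
  have hjm : j < m := by omega
  have htail : ∀ i, j < i → i < m → f (Y i) < Y i := by
    intro i h1 h2
    rcases Nat.lt_or_ge i (m - 1) with hi | hi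
    · exact (hdic i h2).resolve_left (Nat.findGreatest_is_greatest h1 (by omega))
    · have hieq : i = m - 1 := by omega
      have h5 : f (Y i) = Y m := by
        rw [← hYs]
        congr 1
        omega
      have h6 : y < Y i := hminY i (by omega) h2
      rw [h5]
      linarith
  have htaildesc : ∀ i₁ i₂, j < i₁ → i₁ ≤ i₂ → i₂ ≤ m → Y i₂ ≤ Y i₁ := by
    intro i₁ i₂ hji h12 h2m
    induction i₂, h12 using Nat.le_induction with
    | base => exact le_rfl
    | succ i₂ h12 ih =>
      have hstep : f (Y i₂) < Y i₂ := htail i₂ (by omega) (by omega)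
      have := ih (by omega)
      rw [hYs]
      linarith
  -- c : least fixed point of f above Y j
  have hYjI := hYI j
  have hsub1 : Set.Icc (Y j) b ⊆ Set.Icc a b := Set.Icc_subset_Icc hYjI.1 le_rfl
  have hnec : ∃ p ∈ Set.Icc (Y j) b, (fun t => f t - t) p = 0 := by
    obtain ⟨p, hp, he⟩ := fixed_of_ge_le (φ := f) hYjI.2 (hc.mono hsub1)
      hjP.le (hmaps (Set.right_mem_Icc.2 hab)).2
    exact ⟨p, hp, by simpa [sub_eq_zero] using he⟩
  obtain ⟨c, hcmem, hc0, hcmin⟩ := exists_least_zero ((hc.mono hsub1).sub continuousOn_id) hnec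
  have hfc : f c = c := by have := hc0; simpa [sub_eq_zero] using this
  have hcI : c ∈ Set.Icc a b := ⟨hYjI.1.trans hcmem.1, hcmem.2⟩
  have hYjc : Y j < c := by
    rcases eq_or_lt_of_le hcmem.1 with he | hlt'
    · exfalso; rw [← he] at hfc; exact (hfrozen j hjm) hfc
    · exact hlt'
  have hfix_ge : ∀ w, Y j ≤ w → w ≤ b → f w = w → c ≤ w := fun w h1 h2 he =>
    hcmin w ⟨h1, h2⟩ (by simp [he])
  have hsign0 : Y j < f (f (Y j)) := sign_pos a b hab f hc hmaps hnp2 (hYI j) hjP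
  have hc2 : ContinuousOn (f ∘ f) (Set.Icc a b) := hc.comp hc hmaps
  have hkpos : ∀ t, Y j ≤ t → t < c → t < f (f t) := by
    intro t h1 h2
    have htI : t ∈ Set.Icc a b := ⟨hYjI.1.trans h1, h2.le.trans hcI.2⟩
    by_contra h'
    push_neg at h'
    have hne : f (f t) ≠ t := by
      intro he
      have := hfix_ge t h1 htI.2 (hnp2 t htI he)
      linarith
    have hlt' : f (f t) < t := lt_of_le_of_ne h' hne
    have hty : Y j < t := by
      rcases eq_or_lt_of_le h1 with he | hh
      · exfalso; rw [← he] at hlt'; linarith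
      · exact hh
    obtain ⟨q, hq, he⟩ := fixed_of_ge_le (φ := f ∘ f) hty.le
      (hc2.mono (Set.Icc_subset_Icc hYjI.1 htI.2)) hsign0.le hlt'.le
    have hqI : q ∈ Set.Icc a b := ⟨hYjI.1.trans hq.1, hq.2.trans htI.2⟩
    have hfq : f q = q := hnp2 q hqI he
    have := hfix_ge q hq.1 hqI.2 hfq
    linarith [hq.2]
  have hgpos2 : ∀ t, Y j ≤ t → t < c → t < f t := by
    intro t h1 h2
    have htI : t ∈ Set.Icc a b := ⟨hYjI.1.trans h1, h2.le.trans hcI.2⟩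
    by_contra h'
    push_neg at h'
    have hne : f t ≠ t := by
      intro he
      have := hfix_ge t h1 htI.2 he
      linarith
    have hlt' : f t < t := lt_of_le_of_ne h' hne
    have hty : Y j < t := by
      rcases eq_or_lt_of_le h1 with he | hh
      · exfalso; rw [← he] at hlt'; linarith [hjP]
      · exact hh
    obtain ⟨q, hq, he⟩ := fixed_of_ge_le (φ := f) hty.le
      (hc.mono (Set.Icc_subset_Icc hYjI.1 htI.2)) hjP.le hlt'.le
    have hqI : q ∈ Set.Icc a b := ⟨hYjI.1.trans hq.1, hq.2.trans htI.2⟩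
    have := hfix_ge q hq.1 hqI.2 he
    linarith [hq.2]
  have hclt : c < Y (j + 1) := by
    have hj1m : j + 1 < m := by omega
    have hfYj1 : f (Y (j + 1)) < Y (j + 1) := htail (j + 1) (by omega) hj1m
    have hYjle : Y j ≤ Y (j + 1) := by rw [hYs]; exact hjP.le
    obtain ⟨q, hq, he⟩ := fixed_of_ge_le (φ := f) hYjle
      (hc.mono (Set.Icc_subset_Icc hYjI.1 (hYI (j + 1)).2))
      hjP.le hfYj1.le
    have hqI : q ∈ Set.Icc a b := ⟨hYjI.1.trans hq.1, hq.2.trans (hYI (j + 1)).2⟩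
    have hcle : c ≤ q := hfix_ge q hq.1 hqI.2 he
    rcases eq_or_lt_of_le hq.2 with heq | hlt'
    · exfalso; rw [heq] at he; linarith
    · linarith
  have hyYj : y ≤ Y j := by
    rcases Nat.eq_zero_or_pos j with h0 | h0
    · rw [h0, hY0]
    · exact (hminY j h0 hjm).le
  have hexi : ∃ i, j < i ∧ i ≤ m ∧ Y i < c := ⟨m, by omega, le_rfl, by linarith⟩
  set i1 := Nat.find hexi with hi1def
  have hQ : j < i1 ∧ i1 ≤ m ∧ Y i1 < c := Nat.find_spec hexi
  obtain ⟨hji1, hi1m, hYi1⟩ := hQ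
  have hi1min : ∀ i, j < i → i ≤ m → i < i1 → ¬(Y i < c) := fun i ha hb hc' hlt =>
    Nat.find_min hexi hc' ⟨ha, hb, hlt⟩
  have hi1j2 : j + 2 ≤ i1 := by
    rcases Nat.lt_or_ge i1 (j + 2) with hi | hi
    · exfalso
      have : i1 = j + 1 := by omega
      rw [this] at hYi1
      linarith
    · exact hi
  have hσup : c ≤ Y (i1 - 1) := le_of_not_gt (hi1min (i1 - 1) (by omega) (by omega) (by omega))
  have htailσ : f (Y (i1 - 1)) < Y (i1 - 1) := htail (i1 - 1) (by omega) (by omega)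
  have hfσ : f (Y (i1 - 1)) = Y i1 := by
    rw [← hYs]
    congr 1
    omega
  have hσc : c < Y (i1 - 1) := by
    rcases eq_or_lt_of_le hσup with he | hh
    · exfalso; rw [← he] at htailσ; rw [hfc] at htailσ; exact lt_irrefl c htailσ
    · exact hh
  have hu : Y i1 ≤ Y j := by
    rcases eq_or_lt_of_le hi1m with he | hlt'
    · rw [he]; linarith
    · by_contra h'
      push_neg at h'
      have h8 := hgpos2 (Y i1) h'.le hYi1
      have h9 := htail i1 (by omega) hlt'
      linarith
  have hYj1σ : Y (i1 - 1) ≤ Y (j + 1) := htaildesc (j + 1) (i1 - 1) (by omega) (by omega) (by omega)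
  have hmem2 : Y (i1 - 1) ∈ Set.Icc (f c) (f (Y j)) := by
    rw [hfc, ← hYs]
    exact ⟨hσc.le, hYj1σ⟩
  obtain ⟨t, htmem, hft⟩ := intermediate_value_Icc' hYjc.le
    (hc.mono (Set.Icc_subset_Icc hYjI.1 hcI.2)) hmem2
  have htc : t < c := by
    rcases eq_or_lt_of_le htmem.2 with he | hh
    · exfalso; rw [he, hfc] at hft; rw [← hft] at hσc; exact lt_irrefl _ hσc
    · exact hh
  have hfin : t < f (f t) := hkpos t htmem.1 htc
  rw [hft, hfσ] at hfin
  linarith [htmem.1]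

lemma reflect_iterate (a b : ℝ) (f : ℝ → ℝ) :
    ∀ (n : ℕ) (t : ℝ), (fun s => a + b - f (a + b - s))^[n] t = a + b - f^[n] (a + b - t) := by
  intro n
  induction n with
  | zero => intro t; simp
  | succ n ih =>
    intro t
    rw [Function.iterate_succ_apply, Function.iterate_succ_apply, ih]
    have h1 : a + b - (a + b - f (a + b - t)) = f (a + b - t) := by ring
    rw [h1]

lemma stays_below (a b : ℝ) (hab : a ≤ b) (f : ℝ → ℝ)
    (hc : ContinuousOn f (Set.Icc a b))
    (hmaps : Set.MapsTo f (Set.Icc a b) (Set.Icc a b))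
    (hnp2 : ∀ x ∈ Set.Icc a b, f (f x) = x → f x = x)
    {y : ℝ} (hy : y ∈ Set.Icc a b) (h : f y < y) :
    ∀ n, 1 ≤ n → f^[n] y < y := by
  set g : ℝ → ℝ := fun s => a + b - f (a + b - s) with hgdef
  have hρc : Continuous (fun s : ℝ => a + b - s) := by continuity
  have hρmaps : Set.MapsTo (fun s : ℝ => a + b - s) (Set.Icc a b) (Set.Icc a b) := by
    intro t ht
    rw [Set.mem_Icc] at ht ⊢
    refine ⟨by dsimp only; linarith [ht.2], by dsimp only; linarith [ht.1]⟩
  have hinner : ContinuousOn (fun s => f (a + b - s)) (Set.Icc a b) :=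
    hc.comp (hρc.continuousOn) hρmaps
  have hgc : ContinuousOn g (Set.Icc a b) := by
    apply ContinuousOn.sub continuousOn_const hinner
  have hgmaps : Set.MapsTo g (Set.Icc a b) (Set.Icc a b) := by
    intro t ht
    have h1 : f (a + b - t) ∈ Set.Icc a b := hmaps (hρmaps ht)
    rw [Set.mem_Icc] at h1 ⊢
    constructor <;> simp only [hgdef] <;> linarith [h1.1, h1.2]
  have hgg : ∀ t, g (g t) = a + b - f (f (a + b - t)) := by
    intro t
    simp only [hgdef]
    have h1 : a + b - (a + b - f (a + b - t)) = f (a + b - t) := by ring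
    rw [h1]
  have hgnp2 : ∀ x ∈ Set.Icc a b, g (g x) = x → g x = x := by
    intro x hx he
    rw [hgg] at he
    have h2 : f (f (a + b - x)) = a + b - x := by linarith [he]
    have h3 : f (a + b - x) = a + b - x := hnp2 (a + b - x) (hρmaps hx) h2
    simp only [hgdef]
    linarith [h3]
  have hyr : a + b - y ∈ Set.Icc a b := hρmaps hy
  have hgy : a + b - y < g (a + b - y) := by
    simp only [hgdef]
    have h1 : a + b - (a + b - y) = y := by ring
    rw [h1]
    linarith
  have := stays_above a b hab g hgc hgmaps hgnp2 hyr hgy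
  intro n hn
  have h2 := this n hn
  rw [reflect_iterate a b f n (a + b - y)] at h2
  have h3 : a + b - (a + b - y) = y := by ring
  rw [h3] at h2
  linarith

theorem main (a b : ℝ) (hab : a ≤ b) (f : ℝ → ℝ)
    (hc : ContinuousOn f (Set.Icc a b))
    (hmaps : Set.MapsTo f (Set.Icc a b) (Set.Icc a b))
    (hnp2 : ∀ x ∈ Set.Icc a b, f (f x) = x → f x = x) :
    ∀ x ∈ Set.Icc a b, ∃ p ∈ Set.Icc a b, f p = p ∧
      Filter.Tendsto (fun n => f^[n] x) Filter.atTop (nhds p) := by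
  intro x hx
  classical
  set u : ℕ → ℝ := fun n => f^[n] x with hudef
  have huI : ∀ n, u n ∈ Set.Icc a b := fun n => hmaps.iterate n hx
  have hus : ∀ n, u (n + 1) = f (u n) := fun n => Function.iterate_succ_apply' f n x
  have hlimfix : ∀ p : ℝ, Filter.Tendsto u Filter.atTop (nhds p) → p ∈ Set.Icc a b ∧ f p = p := by
    intro p hp
    have hpI : p ∈ Set.Icc a b := isClosed_Icc.mem_of_tendsto hp (Filter.Eventually.of_forall huI)
    have h1 : Filter.Tendsto u Filter.atTop (nhdsWithin p (Set.Icc a b)) :=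
      tendsto_nhdsWithin_of_tendsto_nhds_of_eventually_within u hp (Filter.Eventually.of_forall huI)
    have h2 : Filter.Tendsto (fun n => f (u n)) Filter.atTop (nhds (f p)) :=
      (hc p hpI).tendsto.comp h1
    have h3 : Filter.Tendsto (fun n => u (n + 1)) Filter.atTop (nhds p) :=
      hp.comp (Filter.tendsto_add_atTop_nat 1)
    have h4 : Filter.Tendsto (fun n => u (n + 1)) Filter.atTop (nhds (f p)) := by
      have he : (fun n => u (n + 1)) = fun n => f (u n) := funext hus
      rw [he]; exact h2
    exact ⟨hpI, tendsto_nhds_unique h4 h3⟩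
  by_cases hfro : ∃ n, f (u n) = u n
  · obtain ⟨n, hn⟩ := hfro
    refine ⟨u n, huI n, hn, ?_⟩
    have hconst : ∀ m, m ≥ n → u m = u n := by
      intro m hm
      show f^[m] x = u n
      have h1 : f^[m] x = f^[m - n] (f^[n] x) := by
        rw [← Function.iterate_add_apply]
        congr 1
        omega
      rw [h1]
      exact Function.iterate_fixed hn (m - n)
    exact tendsto_atTop_of_eventually_const hconst
  · push_neg at hfro
    have hdic : ∀ n, u n < f (u n) ∨ f (u n) < u n := fun n => lt_or_gt_of_ne (Ne.symm (hfro n))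
    have hshift : ∀ n m, n < m → u m = f^[m - n] (u n) := by
      intro n m hnm
      have h2 : f^[m - n] (u n) = f^[(m - n) + n] x := (Function.iterate_add_apply f (m - n) n x).symm
      rw [h2]
      show f^[m] x = f^[(m - n) + n] x
      congr 1
      omega
    have hup : ∀ n m, u n < f (u n) → n < m → u n < u m := by
      intro n m h1 hnm
      rw [hshift n m hnm]
      exact stays_above a b hab f hc hmaps hnp2 (huI n) h1 (m - n) (by omega)
    have hdown : ∀ n m, f (u n) < u n → n < m → u m < u n := by
      intro n m h1 hnm
      rw [hshift n m hnm]
      exact stays_below a b hab f hc hmaps hnp2 (huI n) h1 (m - n) (by omega)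
    by_cases hevP : ∃ N, ∀ n, N ≤ n → u n < f (u n)
    · obtain ⟨N, hN⟩ := hevP
      have hmono : Monotone (fun k => u (k + N)) := by
        apply monotone_nat_of_le_succ
        intro k
        have h1 := hN (k + N) (by omega)
        have he : k + 1 + N = (k + N) + 1 := by omega
        rw [he, hus (k + N)]
        exact h1.le
      have hbdd : BddAbove (Set.range fun k => u (k + N)) := by
        refine ⟨b, ?_⟩
        rintro w ⟨k, rfl⟩
        exact (huI _).2
      have hlim : Filter.Tendsto (fun k => u (k + N)) Filter.atTop (nhds (⨆ k, u (k + N))) :=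
        tendsto_atTop_ciSup hmono hbdd
      have hlim2 : Filter.Tendsto u Filter.atTop (nhds (⨆ k, u (k + N))) :=
        (Filter.tendsto_add_atTop_iff_nat N).1 hlim
      obtain ⟨hpI, hpf⟩ := hlimfix _ hlim2
      exact ⟨_, hpI, hpf, hlim2⟩
    · by_cases hevQ : ∃ N, ∀ n, N ≤ n → f (u n) < u n
      · obtain ⟨N, hN⟩ := hevQ
        have hanti : Antitone (fun k => u (k + N)) := by
          apply antitone_nat_of_succ_le
          intro k
          have h1 := hN (k + N) (by omega)
          have he : k + 1 + N = (k + N) + 1 := by omega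
          rw [he, hus (k + N)]
          exact h1.le
        have hbdd : BddBelow (Set.range fun k => u (k + N)) := by
          refine ⟨a, ?_⟩
          rintro w ⟨k, rfl⟩
          exact (huI _).1
        have hlim : Filter.Tendsto (fun k => u (k + N)) Filter.atTop (nhds (⨅ k, u (k + N))) :=
          tendsto_atTop_ciInf hanti hbdd
        have hlim2 : Filter.Tendsto u Filter.atTop (nhds (⨅ k, u (k + N))) :=
          (Filter.tendsto_add_atTop_iff_nat N).1 hlim
        obtain ⟨hpI, hpf⟩ := hlimfix _ hlim2
        exact ⟨_, hpI, hpf, hlim2⟩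
      · push_neg at hevP hevQ
        have hfreqP : ∀ N : ℕ, ∃ n, N ≤ n ∧ u n < f (u n) := by
          intro N
          obtain ⟨n, hn1, hn2⟩ := hevQ N
          exact ⟨n, hn1, lt_of_le_of_ne hn2 (Ne.symm (hfro n))⟩
        have hfreqQ : ∀ N : ℕ, ∃ n, N ≤ n ∧ f (u n) < u n := by
          intro N
          obtain ⟨n, hn1, hn2⟩ := hevP N
          exact ⟨n, hn1, lt_of_le_of_ne hn2 (hfro n)⟩
        set l := Filter.liminf u Filter.atTop with hldef
        set L := Filter.limsup u Filter.atTop with hLdef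
        have hbddA : Filter.IsBoundedUnder (· ≤ ·) Filter.atTop u :=
          Filter.isBoundedUnder_of ⟨b, fun n => (huI n).2⟩
        have hbddB : Filter.IsBoundedUnder (· ≥ ·) Filter.atTop u :=
          Filter.isBoundedUnder_of ⟨a, fun n => (huI n).1⟩
        have hcobA : Filter.IsCoboundedUnder (· ≤ ·) Filter.atTop u := hbddB.isCoboundedUnder_le
        have hcobB : Filter.IsCoboundedUnder (· ≥ ·) Filter.atTop u := hbddA.isCoboundedUnder_ge
        have hPle : ∀ n, u n < f (u n) → u n ≤ l := by
          intro n h1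
          apply Filter.le_liminf_of_le hcobB
          filter_upwards [Filter.eventually_ge_atTop (n + 1)] with m hm
          exact (hup n m h1 (by omega)).le
        have hQge : ∀ n, f (u n) < u n → L ≤ u n := by
          intro n h1
          apply Filter.limsup_le_of_le hcobA
          filter_upwards [Filter.eventually_ge_atTop (n + 1)] with m hm
          exact (hdown n m h1 (by omega)).le
        have hlL : l ≤ L := Filter.liminf_le_limsup hbddA hbddB
        rcases eq_or_lt_of_le hlL with heq | hlt
        · have ht : Filter.Tendsto u Filter.atTop (nhds l) :=
            tendsto_of_liminf_eq_limsup hldef.symm (hLdef.symm.trans heq.symm) hbddA hbddB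
          obtain ⟨hpI, hpf⟩ := hlimfix l ht
          exact ⟨l, hpI, hpf, ht⟩
        · exfalso
          have hla : a ≤ l :=
            Filter.le_liminf_of_le hcobB (Filter.Eventually.of_forall fun n => (huI n).1)
          have hLb : L ≤ b :=
            Filter.limsup_le_of_le hcobA (Filter.Eventually.of_forall fun n => (huI n).2)
          have hlI : l ∈ Set.Icc a b := ⟨hla, by linarith⟩
          have hLI : L ∈ Set.Icc a b := ⟨by linarith, hLb⟩
          have htransPQ : ∀ N : ℕ, ∃ n, N ≤ n ∧ u n < f (u n) ∧ f (u (n + 1)) < u (n + 1) := by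
            intro N
            obtain ⟨n1, hn1, hP1⟩ := hfreqP N
            obtain ⟨n2, hn2, hQ2⟩ := hfreqQ (n1 + 1)
            have hex2 : ∃ k, n1 < k ∧ f (u k) < u k := ⟨n2, by omega, hQ2⟩
            set k := Nat.find hex2 with hkdef
            have hkspec : n1 < k ∧ f (u k) < u k := Nat.find_spec hex2
            have hkmin : ∀ i, i < k → ¬(n1 < i ∧ f (u i) < u i) := fun i hi => Nat.find_min hex2 hi
            have hk1 : n1 + 1 ≤ k := hkspec.1
            refine ⟨k - 1, by omega, ?_, ?_⟩
            · rcases Nat.eq_or_lt_of_le hk1 with he | hh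
              · have h5 : k - 1 = n1 := by omega
                rw [h5]
                exact hP1
              · have h5 := hkmin (k - 1) (by omega)
                have h6 : ¬(f (u (k - 1)) < u (k - 1)) := fun hq => h5 ⟨by omega, hq⟩
                exact (hdic (k - 1)).resolve_right h6
            · have he : k - 1 + 1 = k := by omega
              rw [he]
              exact hkspec.2
          have htransQP : ∀ N : ℕ, ∃ n, N ≤ n ∧ f (u n) < u n ∧ u (n + 1) < f (u (n + 1)) := by
            intro N
            obtain ⟨n1, hn1, hQ1⟩ := hfreqQ N
            obtain ⟨n2, hn2, hP2⟩ := hfreqP (n1 + 1)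
            have hex2 : ∃ k, n1 < k ∧ u k < f (u k) := ⟨n2, by omega, hP2⟩
            set k := Nat.find hex2 with hkdef
            have hkspec : n1 < k ∧ u k < f (u k) := Nat.find_spec hex2
            have hkmin : ∀ i, i < k → ¬(n1 < i ∧ u i < f (u i)) := fun i hi => Nat.find_min hex2 hi
            have hk1 : n1 + 1 ≤ k := hkspec.1
            refine ⟨k - 1, by omega, ?_, ?_⟩
            · rcases Nat.eq_or_lt_of_le hk1 with he | hh
              · have h5 : k - 1 = n1 := by omega
                rw [h5]
                exact hQ1
              · have h5 := hkmin (k - 1) (by omega)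
                have h6 : ¬(u (k - 1) < f (u (k - 1))) := fun hq => h5 ⟨by omega, hq⟩
                exact (hdic (k - 1)).resolve_left h6
            · have he : k - 1 + 1 = k := by omega
              rw [he]
              exact hkspec.2
          have hfl : f l = L := by
            have hkey : ∀ ε : ℝ, 0 < ε → |f l - L| < ε := by
              intro ε hε
              obtain ⟨δ, hδ, hδprop⟩ := Metric.continuousWithinAt_iff.1 (hc l hlI) (ε / 2) (by linarith)
              have hev1 : ∀ᶠ n in Filter.atTop, l - δ < u n :=
                Filter.eventually_lt_of_lt_liminf (by rw [← hldef]; linarith) hbddB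
              have hev2 : ∀ᶠ n in Filter.atTop, u n < L + ε / 2 :=
                Filter.eventually_lt_of_limsup_lt (by rw [← hLdef]; linarith) hbddA
              obtain ⟨N, hN⟩ := Filter.eventually_atTop.1 (hev1.and hev2)
              obtain ⟨n, hnN, hPn, hQn1⟩ := htransPQ N
              have h1 : u n ≤ l := hPle n hPn
              have h2 : l - δ < u n := (hN n hnN).1
              have h3 : dist (u n) l < δ := by
                rw [Real.dist_eq, abs_lt]
                constructor <;> linarith
              have h4 : dist (f (u n)) (f l) < ε / 2 := hδprop (huI n) h3
              have h7 : f (u n) = u (n + 1) := (hus n).symm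
              rw [h7, Real.dist_eq] at h4
              have h5 : L ≤ u (n + 1) := hQge (n + 1) hQn1
              have h6 : u (n + 1) < L + ε / 2 := (hN (n + 1) (by omega)).2
              have h9 : |f l - L| ≤ |f l - u (n + 1)| + |u (n + 1) - L| := abs_sub_le _ _ _
              have h10 : |f l - u (n + 1)| = |u (n + 1) - f l| := abs_sub_comm _ _
              have h11 : |u (n + 1) - L| < ε / 2 := by
                rw [abs_lt]
                constructor <;> linarith
              rw [h10] at h9
              linarith [h4, h9, h11]
            by_contra hne
            exact lt_irrefl _ (hkey _ (abs_pos.2 (sub_ne_zero.2 hne)))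
          have hfL : f L = l := by
            have hkey : ∀ ε : ℝ, 0 < ε → |f L - l| < ε := by
              intro ε hε
              obtain ⟨δ, hδ, hδprop⟩ := Metric.continuousWithinAt_iff.1 (hc L hLI) (ε / 2) (by linarith)
              have hev1 : ∀ᶠ n in Filter.atTop, l - ε / 2 < u n :=
                Filter.eventually_lt_of_lt_liminf (by rw [← hldef]; linarith) hbddB
              have hev2 : ∀ᶠ n in Filter.atTop, u n < L + δ :=
                Filter.eventually_lt_of_limsup_lt (by rw [← hLdef]; linarith) hbddA
              obtain ⟨N, hN⟩ := Filter.eventually_atTop.1 (hev1.and hev2)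
              obtain ⟨n, hnN, hQn, hPn1⟩ := htransQP N
              have h1 : L ≤ u n := hQge n hQn
              have h2 : u n < L + δ := (hN n hnN).2
              have h3 : dist (u n) L < δ := by
                rw [Real.dist_eq, abs_lt]
                constructor <;> linarith
              have h4 : dist (f (u n)) (f L) < ε / 2 := hδprop (huI n) h3
              have h7 : f (u n) = u (n + 1) := (hus n).symm
              rw [h7, Real.dist_eq] at h4
              have h5 : u (n + 1) ≤ l := hPle (n + 1) hPn1
              have h6 : l - ε / 2 < u (n + 1) := (hN (n + 1) (by omega)).1
              have h9 : |f L - l| ≤ |f L - u (n + 1)| + |u (n + 1) - l| := abs_sub_le _ _ _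
              have h10 : |f L - u (n + 1)| = |u (n + 1) - f L| := abs_sub_comm _ _
              have h11 : |u (n + 1) - l| < ε / 2 := by
                rw [abs_lt]
                constructor <;> linarith
              rw [h10] at h9
              linarith [h4, h9, h11]
            by_contra hne
            exact lt_irrefl _ (hkey _ (abs_pos.2 (sub_ne_zero.2 hne)))
          have h12 : f (f l) = l := by rw [hfl, hfL]
          have h13 : f l = l := hnp2 l hlI h12
          rw [h13] at hfl
          linarith

end NP2


theorem no_period_two_implies_regular_on_interval
    (a b : ℝ) (hab : a ≤ b) (f : ℝ → ℝ)
    (hc : ContinuousOn f (Set.Icc a b))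
    (hmaps : Set.MapsTo f (Set.Icc a b) (Set.Icc a b))
    (hnp2 : ∀ x ∈ Set.Icc a b, f (f x) = x → f x = x) :
    ∀ x ∈ Set.Icc a b, ∃ p ∈ Set.Icc a b, f p = p ∧
      Filter.Tendsto (fun n => f^[n] x) Filter.atTop (nhds p) := by
  exact NP2.main a b hab f hc hmaps hnp2
end

section
/- For m = 2, any quadratic stochastic operator on the 1-dimensional simplex whose coefficients satisfy P_{ijk} > (3 − √7)/2 for all i,j,k is regular: every trajectory converges to a fixed point. -/
lemma qsoF_mem (a b c t : ℝ)
    (ha1 : (0.177:ℝ) ≤ a) (ha2 : a ≤ 0.823)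
    (hb1 : (0.177:ℝ) ≤ b) (hb2 : b ≤ 0.823)
    (hc1 : (0.177:ℝ) ≤ c) (hc2 : c ≤ 0.823)
    (ht0 : (0:ℝ) ≤ t) (ht1 : t ≤ 1) :
    0.177 ≤ a*t^2 + 2*b*t*(1-t) + c*(1-t)^2 ∧ a*t^2 + 2*b*t*(1-t) + c*(1-t)^2 ≤ 0.823 := by
  constructor
  · nlinarith [mul_nonneg (mul_nonneg ht0 (by linarith : (0:ℝ) ≤ 1-t)) (by linarith : (0:ℝ) ≤ b - 0.177),
      mul_nonneg (sq_nonneg t) (by linarith : (0:ℝ) ≤ a - 0.177),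
      mul_nonneg (sq_nonneg (1-t)) (by linarith : (0:ℝ) ≤ c - 0.177)]
  · nlinarith [mul_nonneg (mul_nonneg ht0 (by linarith : (0:ℝ) ≤ 1-t)) (by linarith : (0:ℝ) ≤ 0.823 - b),
      mul_nonneg (sq_nonneg t) (by linarith : (0:ℝ) ≤ 0.823 - a),
      mul_nonneg (sq_nonneg (1-t)) (by linarith : (0:ℝ) ≤ 0.823 - c)]

lemma qso_tau (a b c t1 t2 : ℝ)
    (ha2 : a ≤ 0.823) (hb2 : b ≤ 0.823) (hc2 : c ≤ 0.823)
    (ht1a : (0.177:ℝ) ≤ t1) (ht1b : t1 ≤ 0.823)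
    (ht2 : t2 = a*t1^2 + 2*b*t1*(1-t1) + c*(1-t1)^2) :
    0.177 + 0.291342*(0.823-b) + 0.031329*(0.823-c) ≤ 1 - t2 := by
  nlinarith [mul_nonneg (by linarith : (0:ℝ) ≤ 0.823 - a) (by nlinarith : (0:ℝ) ≤ t1^2 - 0.031329),
    mul_nonneg (by linarith : (0:ℝ) ≤ 0.823 - b) (by nlinarith : (0:ℝ) ≤ t1*(1-t1) - 0.145671),
    mul_nonneg (by linarith : (0:ℝ) ≤ 0.823 - c) (by nlinarith : (0:ℝ) ≤ (1-t1)^2 - 0.031329)]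

lemma qso_l3 (a b c t2 t3 s : ℝ)
    (ha1 : (0.177:ℝ) ≤ a) (hb1 : (0.177:ℝ) ≤ b) (hc1 : (0.177:ℝ) ≤ c)
    (ht2a : (0.177:ℝ) ≤ t2) (ht2b : t2 ≤ 0.823)
    (ht3 : t3 = a*t2^2 + 2*b*t2*(1-t2) + c*(1-t2)^2)
    (hs0 : (0:ℝ) ≤ s) (hs : s ≤ 1 - t2) :
    0.177 + (c-0.177)*s^2 ≤ t3 := by
  nlinarith [mul_le_mul_of_nonneg_left (mul_self_le_mul_self hs0 hs) (by linarith : (0:ℝ) ≤ c - 0.177),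
    mul_nonneg (mul_nonneg (by linarith : (0:ℝ) ≤ t2) (by linarith : (0:ℝ) ≤ 1-t2)) (by linarith : (0:ℝ) ≤ b - 0.177),
    mul_nonneg (sq_nonneg t2) (by linarith : (0:ℝ) ≤ a - 0.177)]

lemma qso_2var (b c : ℝ)
    (hb1 : (0.177:ℝ) ≤ b) (hc2 : c ≤ 0.823) (hv : b - c ≤ -0.4) :
    (0.177-b)*(0.177 + (c-0.177)*(0.177 + 0.291342*(0.823-b) + 0.031329*(0.823-c))^2)
      + (b-c)*(1-(0.177 + (c-0.177)*(0.177 + 0.291342*(0.823-b) + 0.031329*(0.823-c))^2)) ≥ -0.495 := by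
  nlinarith [sq_nonneg (b-0.177), sq_nonneg (0.823-c), mul_nonneg (by linarith : (0:ℝ) ≤ b-0.177) (by linarith : (0:ℝ) ≤ 0.823-c),
    mul_nonneg (by linarith : (0:ℝ) ≤ b-0.177) (by linarith : (0:ℝ) ≤ c-b-0.4),
    mul_nonneg (by linarith : (0:ℝ) ≤ 0.823-c) (by linarith : (0:ℝ) ≤ c-b-0.4),
    sq_nonneg (c-b-0.4), sq_nonneg (b+c-1)]

lemma qso_mono (a b c l t3 : ℝ) (h : l ≤ t3) (hsl : (0:ℝ) ≤ (a-b)+(c-b)) :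
    (a-b)*l + (b-c)*(1-l) ≤ (a-b)*t3 + (b-c)*(1-t3) := by
  nlinarith [mul_nonneg hsl (sub_nonneg.2 h)]

lemma qso_ared (a b c l : ℝ) (h : (0.177:ℝ) ≤ a) (hl : (0:ℝ) ≤ l) :
    (0.177-b)*l + (b-c)*(1-l) ≤ (a-b)*l + (b-c)*(1-l) := by
  nlinarith [mul_nonneg (by linarith : (0:ℝ) ≤ a-0.177) hl]

lemma qso_caseV (a b c t1 t2 t3 : ℝ)
    (ha1 : (0.177:ℝ) ≤ a) (ha2 : a ≤ 0.823)
    (hb1 : (0.177:ℝ) ≤ b) (hb2 : b ≤ 0.823)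
    (hc1 : (0.177:ℝ) ≤ c) (hc2 : c ≤ 0.823)
    (ht1a : (0.177:ℝ) ≤ t1) (ht1b : t1 ≤ 0.823)
    (ht2 : t2 = a*t1^2 + 2*b*t1*(1-t1) + c*(1-t1)^2)
    (ht3 : t3 = a*t2^2 + 2*b*t2*(1-t2) + c*(1-t2)^2)
    (hv : b - c ≤ -0.4) :
    -0.495 ≤ (a-b)*t3 + (b-c)*(1-t3) := by
  have hm := qsoF_mem a b c t1 ha1 ha2 hb1 hb2 hc1 hc2 (by linarith) (by linarith)
  have ht2a : (0.177:ℝ) ≤ t2 := by rw [ht2]; exact hm.1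
  have ht2b : t2 ≤ (0.823:ℝ) := by rw [ht2]; exact hm.2
  have hs0 : (0:ℝ) ≤ 0.177 + 0.291342*(0.823-b) + 0.031329*(0.823-c) := by nlinarith
  have hs : 0.177 + 0.291342*(0.823-b) + 0.031329*(0.823-c) ≤ 1 - t2 :=
    qso_tau a b c t1 t2 ha2 hb2 hc2 ht1a ht1b ht2
  have hl3 : 0.177 + (c-0.177)*(0.177 + 0.291342*(0.823-b) + 0.031329*(0.823-c))^2 ≤ t3 :=
    qso_l3 a b c t2 t3 _ ha1 hb1 hc1 ht2a ht2b ht3 hs0 hs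
  have hl0 : (0:ℝ) ≤ 0.177 + (c-0.177)*(0.177 + 0.291342*(0.823-b) + 0.031329*(0.823-c))^2 := by
    nlinarith [sq_nonneg (0.177 + 0.291342*(0.823-b) + 0.031329*(0.823-c))]
  have hslope : (0:ℝ) ≤ (a-b) + (c-b) := by linarith
  have hmono := qso_mono a b c _ t3 hl3 hslope
  have hared := qso_ared a b c (0.177 + (c-0.177)*(0.177 + 0.291342*(0.823-b) + 0.031329*(0.823-c))^2) ha1 hl0
  have hfin := qso_2var b c hb1 hc2 hv
  linarith

set_option maxHeartbeats 1000000 in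
lemma qso_caseU (a b c t2 t3 : ℝ)
    (ha1 : (0.177:ℝ) ≤ a) (ha2 : a ≤ 0.823)
    (hb1 : (0.177:ℝ) ≤ b) (hb2 : b ≤ 0.823)
    (hc1 : (0.177:ℝ) ≤ c) (hc2 : c ≤ 0.823)
    (ht2a : (0.177:ℝ) ≤ t2) (ht2b : t2 ≤ 0.823)
    (ht3 : t3 = a*t2^2 + 2*b*t2*(1-t2) + c*(1-t2)^2)
    (hu : (0.4:ℝ) ≤ a - b) :
    (a-b)*t3 + (b-c)*(1-t3) ≤ 0.495 := by
  have hb' : b ≤ 0.423 := by linarith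
  have hm := qsoF_mem a b c t2 ha1 ha2 hb1 hb2 hc1 hc2 (by linarith) (by linarith)
  have ht3a : (0.177:ℝ) ≤ t3 := by rw [ht3]; exact hm.1
  have ht3b : t3 ≤ (0.823:ℝ) := by rw [ht3]; exact hm.2
  have h3b : t3 ≤ 0.823 - 0.291342*(0.823-b) := by
    nlinarith [mul_nonneg (by linarith : (0:ℝ) ≤ 0.823 - b) (by nlinarith : (0:ℝ) ≤ t2*(1-t2) - 0.145671),
      mul_nonneg (by linarith : (0:ℝ) ≤ 0.823 - a) (sq_nonneg t2),
      mul_nonneg (by linarith : (0:ℝ) ≤ 0.823 - c) (sq_nonneg (1-t2))]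
  clear ht3 hm
  nlinarith [mul_nonneg (by linarith : (0:ℝ) ≤ c - 0.177) (by linarith : (0:ℝ) ≤ 1 - t3),
    mul_nonneg (by linarith : (0:ℝ) ≤ 0.823 - a) (by linarith : (0:ℝ) ≤ t3),
    mul_nonneg (by linarith : (0:ℝ) ≤ 0.823 - 0.291342*(0.823-b) - t3) (by linarith : (0:ℝ) ≤ 1 - 2*b),
    mul_nonneg (by linarith : (0:ℝ) ≤ b - 0.177) (by linarith : (0:ℝ) ≤ 0.423 - b)]

set_option maxHeartbeats 2000000 in
lemma qso_core (a b c t1 t2 t3 : ℝ)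
    (ha1 : (0.177:ℝ) ≤ a) (ha2 : a ≤ 0.823)
    (hb1 : (0.177:ℝ) ≤ b) (hb2 : b ≤ 0.823)
    (hc1 : (0.177:ℝ) ≤ c) (hc2 : c ≤ 0.823)
    (ht1a : (0.177:ℝ) ≤ t1) (ht1b : t1 ≤ 0.823)
    (ht2 : t2 = a*t1^2 + 2*b*t1*(1-t1) + c*(1-t1)^2)
    (ht3 : t3 = a*t2^2 + 2*b*t2*(1-t2) + c*(1-t2)^2) :
    |(a-b)*t3 + (b-c)*(1-t3)| ≤ 0.495 := by
  have hm2 := qsoF_mem a b c t1 ha1 ha2 hb1 hb2 hc1 hc2 (by linarith) (by linarith)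
  have ht2a : (0.177:ℝ) ≤ t2 := by rw [ht2]; exact hm2.1
  have ht2b : t2 ≤ (0.823:ℝ) := by rw [ht2]; exact hm2.2
  have hm3 := qsoF_mem a b c t2 ha1 ha2 hb1 hb2 hc1 hc2 (by linarith) (by linarith)
  have ht3a : (0.177:ℝ) ≤ t3 := by rw [ht3]; exact hm3.1
  have ht3b : t3 ≤ (0.823:ℝ) := by rw [ht3]; exact hm3.2
  rw [abs_le]
  constructor
  · rcases le_or_gt (b - c) (-0.4) with hv | hv
    · exact qso_caseV a b c t1 t2 t3 ha1 ha2 hb1 hb2 hc1 hc2 ht1a ht1b ht2 ht3 hv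
    rcases le_or_gt (a - b) (-0.4) with hu | hu
    · have h := qso_caseV (1-c) (1-b) (1-a) (1-t1) (1-t2) (1-t3)
        (by linarith) (by linarith) (by linarith) (by linarith) (by linarith) (by linarith)
        (by linarith) (by linarith)
        (by linear_combination -ht2) (by linear_combination -ht3) (by linarith)
      linarith [h]
    · have h1 : (0:ℝ) ≤ (a - b + 0.4) * t3 := mul_nonneg (by linarith) (by linarith)
      have h2 : (0:ℝ) ≤ (b - c + 0.4) * (1 - t3) := mul_nonneg (by linarith) (by linarith)
      linarith [h1, h2]
  · rcases le_or_gt (0.4:ℝ) (a - b) with hu | hu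
    · exact qso_caseU a b c t2 t3 ha1 ha2 hb1 hb2 hc1 hc2 ht2a ht2b ht3 hu
    rcases le_or_gt (0.4:ℝ) (b - c) with hv | hv
    · have h := qso_caseU (1-c) (1-b) (1-a) (1-t2) (1-t3)
        (by linarith) (by linarith) (by linarith) (by linarith) (by linarith) (by linarith)
        (by linarith) (by linarith)
        (by linear_combination -ht3) (by linarith)
      linarith [h]
    · have h1 : (0:ℝ) ≤ (0.4 - (a - b)) * t3 := mul_nonneg (by linarith) (by linarith)
      have h2 : (0:ℝ) ≤ (0.4 - (b - c)) * (1 - t3) := mul_nonneg (by linarith) (by linarith)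
      linarith [h1, h2]

lemma qso_step (a b c p q : ℝ)
    (hp : |(a-b)*p + (b-c)*(1-p)| ≤ 0.495) (hq : |(a-b)*q + (b-c)*(1-q)| ≤ 0.495) :
    |(a*p^2 + 2*b*p*(1-p) + c*(1-p)^2) - (a*q^2 + 2*b*q*(1-q) + c*(1-q)^2)| ≤ 0.99 * |p - q| := by
  have hfac : (a*p^2 + 2*b*p*(1-p) + c*(1-p)^2) - (a*q^2 + 2*b*q*(1-q) + c*(1-q)^2)
      = (p - q) * (((a-b)*p + (b-c)*(1-p)) + ((a-b)*q + (b-c)*(1-q))) := by ring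
  rw [hfac, abs_mul]
  have habs : |((a-b)*p + (b-c)*(1-p)) + ((a-b)*q + (b-c)*(1-q))| ≤ 0.99 := by
    have := abs_add_le ((a-b)*p + (b-c)*(1-p)) ((a-b)*q + (b-c)*(1-q))
    linarith
  have h2 := mul_le_mul_of_nonneg_left habs (abs_nonneg (p - q))
  linarith

set_option maxHeartbeats 800000 in
lemma qso_tendsto (a b c : ℝ)
    (ha1 : (0.177:ℝ) ≤ a) (ha2 : a ≤ 0.823)
    (hb1 : (0.177:ℝ) ≤ b) (hb2 : b ≤ 0.823)
    (hc1 : (0.177:ℝ) ≤ c) (hc2 : c ≤ 0.823)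
    (t0 : ℝ) (h00 : (0:ℝ) ≤ t0) (h01 : t0 ≤ 1) :
    ∃ p : ℝ, 0 ≤ p ∧ p ≤ 1 ∧ (a*p^2 + 2*b*p*(1-p) + c*(1-p)^2 = p) ∧
      Filter.Tendsto (fun n => (fun t => a*t^2 + 2*b*t*(1-t) + c*(1-t)^2)^[n] t0)
        Filter.atTop (nhds p) := by
  set F : ℝ → ℝ := fun t => a*t^2 + 2*b*t*(1-t) + c*(1-t)^2 with hF
  have hFapp : ∀ s : ℝ, F s = a*s^2 + 2*b*s*(1-s) + c*(1-s)^2 := fun s => rfl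
  have hFc : Continuous F := by
    rw [hF]; fun_prop
  set t : ℕ → ℝ := fun n => F^[n] t0 with ht
  have hsucc : ∀ n, t (n+1) = F (t n) := fun n => Function.iterate_succ_apply' F n t0
  have htz : t 0 = t0 := rfl
  clear_value t
  clear_value F
  have hmem01 : ∀ n, 0 ≤ t n ∧ t n ≤ 1 := by
    intro n
    induction n with
    | zero => rw [htz]; exact ⟨h00, h01⟩
    | succ n ih =>
      rw [hsucc n, hFapp]
      have h := qsoF_mem a b c (t n) ha1 ha2 hb1 hb2 hc1 hc2 ih.1 ih.2
      exact ⟨by linarith [h.1], by linarith [h.2]⟩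
  have hmem : ∀ n, 0.177 ≤ t (n+1) ∧ t (n+1) ≤ 0.823 := by
    intro n
    rw [hsucc n, hFapp]
    exact qsoF_mem a b c (t n) ha1 ha2 hb1 hb2 hc1 hc2 (hmem01 n).1 (hmem01 n).2
  have hcore : ∀ n, |(a-b)*(t (n+3)) + (b-c)*(1-(t (n+3)))| ≤ 0.495 := by
    intro n
    have e2 : t (n+2) = a*(t (n+1))^2 + 2*b*(t (n+1))*(1-(t (n+1))) + c*(1-(t (n+1)))^2 := by
      rw [hsucc (n+1), hFapp]
    have e3 : t (n+3) = a*(t (n+2))^2 + 2*b*(t (n+2))*(1-(t (n+2))) + c*(1-(t (n+2)))^2 := by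
      rw [hsucc (n+2), hFapp]
    exact qso_core a b c (t (n+1)) (t (n+2)) (t (n+3)) ha1 ha2 hb1 hb2 hc1 hc2
      (hmem n).1 (hmem n).2 e2 e3
  have hd : ∀ n, dist (t (n+3+1)) (t (n+4+1)) ≤ 0.99 * dist (t (n+3)) (t (n+4)) := by
    intro n
    conv_lhs => rw [hsucc (n+3), hsucc (n+4), hFapp, hFapp]
    rw [Real.dist_eq, Real.dist_eq]
    exact qso_step a b c (t (n+3)) (t (n+4)) (hcore n) (hcore (n+1))
  have hgeo : ∀ n, dist (t (n+3)) (t (n+3+1)) ≤ (dist (t 3) (t 4)) * 0.99^n := by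
    intro n
    induction n with
    | zero => simp
    | succ n ih =>
      have h1 := hd n
      have h2 : (0.99:ℝ) * dist (t (n+3)) (t (n+4)) ≤ 0.99 * ((dist (t 3) (t 4)) * 0.99^n) :=
        mul_le_mul_of_nonneg_left ih (by norm_num)
      calc dist (t (n+1+3)) (t (n+1+3+1)) ≤ 0.99 * dist (t (n+3)) (t (n+4)) := h1
        _ ≤ 0.99 * ((dist (t 3) (t 4)) * 0.99^n) := h2
        _ = (dist (t 3) (t 4)) * 0.99^(n+1) := by ring
  have hcauchy : CauchySeq (fun n => t (n+3)) :=
    cauchySeq_of_le_geometric 0.99 (dist (t 3) (t 4)) (by norm_num) hgeo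
  obtain ⟨p, hp⟩ := cauchySeq_tendsto_of_complete hcauchy
  have htt : Filter.Tendsto t Filter.atTop (nhds p) :=
    (Filter.tendsto_add_atTop_iff_nat 3).mp hp
  have hp0 : 0 ≤ p := ge_of_tendsto' htt (fun n => (hmem01 n).1)
  have hp1 : p ≤ 1 := le_of_tendsto' htt (fun n => (hmem01 n).2)
  have hFp : F p = p := by
    have h1 : Filter.Tendsto (fun n => t (n+1)) Filter.atTop (nhds p) :=
      (Filter.tendsto_add_atTop_iff_nat 1).mpr htt
    have h2 : Filter.Tendsto (fun n => F (t n)) Filter.atTop (nhds (F p)) :=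
      (hFc.tendsto p).comp htt
    have h3 : (fun n => t (n+1)) = fun n => F (t n) := funext hsucc
    rw [h3] at h1
    exact tendsto_nhds_unique h2 h1
  exact ⟨p, hp0, hp1, by rw [← hFapp p]; exact hFp, htt⟩

set_option maxHeartbeats 1000000 in
theorem qso_regular_on_one_dim_simplex (P : Fin 2 → Fin 2 → Fin 2 → ℝ)
    (hnn : ∀ i j k, 0 ≤ P i j k)
    (hsymm : ∀ i j k, P i j k = P j i k)
    (hsum : ∀ i j, ∑ k, P i j k = 1)
    (hlb : ∀ i j k, (3 - Real.sqrt 7) / 2 < P i j k)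
    (V : (Fin 2 → ℝ) → (Fin 2 → ℝ))
    (hV : ∀ x k, V x k = ∑ i, ∑ j, P i j k * x i * x j) :
    ∀ x : Fin 2 → ℝ, (∀ i, 0 ≤ x i) → ∑ i, x i = 1 →
      ∃ p : Fin 2 → ℝ, (∀ i, 0 ≤ p i) ∧ ∑ i, p i = 1 ∧ V p = p ∧
        Filter.Tendsto (fun n => V^[n] x) Filter.atTop (nhds p) := by
  intro x hx hsx
  have h7 : Real.sqrt 7 < 2.646 := by
    nlinarith [Real.sq_sqrt (by norm_num : (0:ℝ) ≤ 7), Real.sqrt_nonneg 7]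
  have hlb' : ∀ i j k, (0.177:ℝ) ≤ P i j k := by
    intro i j k; have := hlb i j k; linarith
  have hsum2 : ∀ i j, P i j 0 + P i j 1 = 1 := by
    intro i j; have := hsum i j; rwa [Fin.sum_univ_two] at this
  have hub : ∀ i j k, P i j k ≤ 0.823 := by
    intro i j k
    have h0 := hlb' i j 0
    have h1 := hlb' i j 1
    have h2 := hsum2 i j
    fin_cases k
    · show P i j 0 ≤ 0.823; linarith
    · show P i j 1 ≤ 0.823; linarith
  have hP1 : ∀ i j, P i j 1 = 1 - P i j 0 := fun i j => by have := hsum2 i j; linarith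
  set a := P 0 0 0 with hadef
  set b := P 0 1 0 with hbdef
  set c := P 1 1 0 with hcdef
  have hx01 : x 0 + x 1 = 1 := by have := hsx; rwa [Fin.sum_univ_two] at this
  have hx00 : (0:ℝ) ≤ x 0 := hx 0
  have hx0' : x 0 ≤ 1 := by have := hx 1; linarith
  -- conjugacy
  have hVe : ∀ t : ℝ, V ![t, 1-t] =
      ![a*t^2 + 2*b*t*(1-t) + c*(1-t)^2, 1-(a*t^2 + 2*b*t*(1-t) + c*(1-t)^2)] := by
    intro t
    funext k
    rw [hV]
    fin_cases k
    · simp [Fin.sum_univ_two]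
      linear_combination (-(t*(1-t))) * (hsymm 0 1 0)
    · simp [Fin.sum_univ_two]
      linear_combination t^2 * (hP1 0 0) + (t*(1-t)) * (hP1 0 1) + ((1-t)*t) * (hP1 1 0)
        + (1-t)^2 * (hP1 1 1) + (-((1-t)*t)) * (hsymm 1 0 0)
  have hxe : x = ![x 0, 1 - x 0] := by
    funext i
    fin_cases i
    · simp
    · simp; linarith
  obtain ⟨p, hp0, hp1, hfix, htend⟩ :=
    qso_tendsto a b c (hlb' 0 0 0) (hub 0 0 0) (hlb' 0 1 0) (hub 0 1 0) (hlb' 1 1 0) (hub 1 1 0)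
      (x 0) hx00 hx0'
  have hit : ∀ n, V^[n] x =
      ![(fun t => a*t^2 + 2*b*t*(1-t) + c*(1-t)^2)^[n] (x 0),
        1 - (fun t => a*t^2 + 2*b*t*(1-t) + c*(1-t)^2)^[n] (x 0)] := by
    intro n
    induction n with
    | zero => simpa using hxe
    | succ n ih =>
      rw [Function.iterate_succ_apply', ih, hVe, Function.iterate_succ_apply']
  refine ⟨![p, 1-p], ?_, ?_, ?_, ?_⟩
  · intro i; fin_cases i
    · simpa using hp0
    · simp; linarith
  · rw [Fin.sum_univ_two]; simp
  · rw [hVe p, hfix]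
  · have heq : (fun n => V^[n] x) = fun n =>
        (![(fun t => a*t^2 + 2*b*t*(1-t) + c*(1-t)^2)^[n] (x 0),
          1 - (fun t => a*t^2 + 2*b*t*(1-t) + c*(1-t)^2)^[n] (x 0)] : Fin 2 → ℝ) :=
      funext hit
    rw [heq]
    rw [tendsto_pi_nhds]
    intro i
    fin_cases i
    · simpa using htend
    · simpa using Filter.Tendsto.const_sub 1 htend
end

section
/- For the operator V(x₁,x₂,x₃) = (x₁² + 2x₁x₂, x₂² + 2x₂x₃, x₃² + 2x₁x₃) on S², the trajectory of any interior point x ≠ (1/3,1/3,1/3) does not converge to any fixed point of V; hence V is not regular. -/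
lemma amgm3 (a b c : ℝ) (ha : 0 ≤ a) (hb : 0 ≤ b) (hc : 0 ≤ c) (h : a + b + c = 3) :
    a * b * c ≤ 1 := by
  nlinarith [sq_nonneg (a-b), sq_nonneg (b-c), sq_nonneg (a-c), sq_nonneg (a+b-2*c),
    sq_nonneg (b+c-2*a), mul_nonneg ha hb, mul_nonneg hb hc, mul_nonneg ha hc]

lemma amgm3_eq (a b c : ℝ) (ha : 0 ≤ a) (hb : 0 ≤ b) (hc : 0 ≤ c) (h : a + b + c = 1)
    (hge : 1/27 ≤ a * b * c) : a = 1/3 ∧ b = 1/3 ∧ c = 1/3 := by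
  have key : 0 ≤ a * (b - c)^2 := mul_nonneg ha (sq_nonneg _)
  have hid : a*(1-a)^2 - 4*(a*b*c) - a*(b-c)^2 = 0 := by
    linear_combination (-(a*(1-a+b+c)))*h
  have h1 : a * (1 - a)^2 ≥ 4/27 := by linarith
  have h2 : a * (1-a)^2 - 4/27 = (a - 1/3)^2 * (a - 4/3) := by ring
  have ha1 : a ≤ 1 := by linarith
  have hA2 : (a - 1/3)^2 = 0 := by nlinarith [sq_nonneg (a - 1/3)]
  have hA : a = 1/3 := by
    have := pow_eq_zero_iff (n := 2) (by norm_num) |>.mp hA2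
    linarith [sub_eq_zero.mp this]
  subst hA
  have hbc2 : (b - c)^2 = 0 := by nlinarith [sq_nonneg (b-c)]
  have hbc : b = c := by
    have := pow_eq_zero_iff (n := 2) (by norm_num) |>.mp hbc2
    linarith [sub_eq_zero.mp this]
  refine ⟨rfl, ?_, ?_⟩ <;> linarith

/-- Interior points of the simplex. -/
def Int3 (x : ℝ × ℝ × ℝ) : Prop :=
  0 < x.1 ∧ 0 < x.2.1 ∧ 0 < x.2.2 ∧ x.1 + x.2.1 + x.2.2 = 1

lemma V_interior (V : ℝ × ℝ × ℝ → ℝ × ℝ × ℝ)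
    (hV : ∀ x : ℝ × ℝ × ℝ, V x =
      (x.1^2 + 2*x.1*x.2.1, x.2.1^2 + 2*x.2.1*x.2.2, x.2.2^2 + 2*x.1*x.2.2))
    (x : ℝ × ℝ × ℝ) (hx : Int3 x) : Int3 (V x) := by
  obtain ⟨h1, h2, h3, hs⟩ := hx
  rw [Int3, hV]
  refine ⟨?_, ?_, ?_, ?_⟩ <;> dsimp only <;> nlinarith

lemma iter_interior (V : ℝ × ℝ × ℝ → ℝ × ℝ × ℝ)
    (hV : ∀ x : ℝ × ℝ × ℝ, V x =
      (x.1^2 + 2*x.1*x.2.1, x.2.1^2 + 2*x.2.1*x.2.2, x.2.2^2 + 2*x.1*x.2.2))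
    (x : ℝ × ℝ × ℝ) (hx : Int3 x) : ∀ n, Int3 (V^[n] x) := by
  intro n
  induction n with
  | zero => exact hx
  | succ n ih => rw [Function.iterate_succ_apply']; exact V_interior V hV _ ih

/-- the product Lyapunov function is nonincreasing -/
lemma prod_dec (V : ℝ × ℝ × ℝ → ℝ × ℝ × ℝ)
    (hV : ∀ x : ℝ × ℝ × ℝ, V x =
      (x.1^2 + 2*x.1*x.2.1, x.2.1^2 + 2*x.2.1*x.2.2, x.2.2^2 + 2*x.1*x.2.2))
    (x : ℝ × ℝ × ℝ) (hx : Int3 x) :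
    (V x).1 * (V x).2.1 * (V x).2.2 ≤ x.1 * x.2.1 * x.2.2 := by
  obtain ⟨h1, h2, h3, hs⟩ := hx
  rw [hV]
  have key : (x.1 + 2*x.2.1) * (x.2.1 + 2*x.2.2) * (x.2.2 + 2*x.1) ≤ 1 :=
    amgm3 _ _ _ (by linarith) (by linarith) (by linarith) (by linarith)
  have hP : 0 < x.1 * x.2.1 * x.2.2 := by positivity
  dsimp only
  nlinarith [mul_le_mul_of_nonneg_left key (le_of_lt hP)]

/-- No interior point other than the center converges to the center. -/
lemma no_conv_center (V : ℝ × ℝ × ℝ → ℝ × ℝ × ℝ)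
    (hV : ∀ x : ℝ × ℝ × ℝ, V x =
      (x.1^2 + 2*x.1*x.2.1, x.2.1^2 + 2*x.2.1*x.2.2, x.2.2^2 + 2*x.1*x.2.2))
    (x : ℝ × ℝ × ℝ) (hx : Int3 x) (hne : x ≠ (1/3, 1/3, 1/3)) :
    ¬ Filter.Tendsto (fun n => V^[n] x) Filter.atTop (nhds ((1:ℝ)/3, (1:ℝ)/3, (1:ℝ)/3)) := by
  intro hT
  obtain ⟨h1, h2, h3, hs⟩ := hx
  have hlt : x.1 * x.2.1 * x.2.2 < 1/27 := by
    by_contra hge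
    push_neg at hge
    obtain ⟨e1, e2, e3⟩ := amgm3_eq x.1 x.2.1 x.2.2 h1.le h2.le h3.le hs hge
    apply hne
    have : x = (x.1, x.2.1, x.2.2) := rfl
    rw [this, e1, e2, e3]
  have hbound : ∀ n, (V^[n] x).1 * (V^[n] x).2.1 * (V^[n] x).2.2 ≤ x.1 * x.2.1 * x.2.2 := by
    intro n
    induction n with
    | zero => simp
    | succ n ih =>
      rw [Function.iterate_succ_apply']
      exact le_trans (prod_dec V hV _ (iter_interior V hV x ⟨h1, h2, h3, hs⟩ n)) ih
  have hPc : Continuous (fun y : ℝ × ℝ × ℝ => y.1 * y.2.1 * y.2.2) :=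
    (continuous_fst.mul (continuous_fst.comp continuous_snd)).mul
      (continuous_snd.comp continuous_snd)
  have hTP : Filter.Tendsto (fun n => (V^[n] x).1 * (V^[n] x).2.1 * (V^[n] x).2.2)
      Filter.atTop (nhds (1/27)) := by
    have h := (hPc.tendsto ((1:ℝ)/3, (1:ℝ)/3, (1:ℝ)/3)).comp hT
    simp only [Function.comp_def] at h
    norm_num at h
    exact h
  have : (1:ℝ)/27 ≤ x.1 * x.2.1 * x.2.2 :=
    le_of_tendsto hTP (Filter.Eventually.of_forall hbound)
  linarith

lemma no_conv_vertex1 (V : ℝ × ℝ × ℝ → ℝ × ℝ × ℝ)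
    (hV : ∀ x : ℝ × ℝ × ℝ, V x =
      (x.1^2 + 2*x.1*x.2.1, x.2.1^2 + 2*x.2.1*x.2.2, x.2.2^2 + 2*x.1*x.2.2))
    (x : ℝ × ℝ × ℝ) (hx : Int3 x) :
    ¬ Filter.Tendsto (fun n => V^[n] x) Filter.atTop (nhds ((1:ℝ), (0:ℝ), (0:ℝ))) := by
  intro hT
  have hpos := iter_interior V hV x hx
  have h1 : Filter.Tendsto (fun n => (V^[n] x).1) Filter.atTop (nhds 1) :=
    (continuous_fst.tendsto _).comp hT
  have h3 : Filter.Tendsto (fun n => (V^[n] x).2.2) Filter.atTop (nhds 0) :=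
    ((continuous_snd.comp continuous_snd).tendsto _).comp hT
  obtain ⟨N, hN⟩ := Filter.eventually_atTop.mp
    (h1.eventually (eventually_gt_nhds (by norm_num : (1:ℝ)/2 < 1)))
  have hmono : ∀ n, N ≤ n → (V^[N] x).2.2 ≤ (V^[n] x).2.2 := by
    intro n hn
    induction n, hn using Nat.le_induction with
    | base => exact le_refl _
    | succ n hn ih =>
      refine le_trans ih ?_
      rw [Function.iterate_succ_apply', hV]
      obtain ⟨p1, p2, p3, ps⟩ := hpos n
      have := hN n hn
      dsimp only
      nlinarith
  obtain ⟨M, hM⟩ := Filter.eventually_atTop.mp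
    (h3.eventually (eventually_lt_nhds (hpos N).2.2.1))
  have hle := hmono (max N M) (le_max_left _ _)
  have hlt := hM (max N M) (le_max_right _ _)
  linarith

lemma no_conv_vertex2 (V : ℝ × ℝ × ℝ → ℝ × ℝ × ℝ)
    (hV : ∀ x : ℝ × ℝ × ℝ, V x =
      (x.1^2 + 2*x.1*x.2.1, x.2.1^2 + 2*x.2.1*x.2.2, x.2.2^2 + 2*x.1*x.2.2))
    (x : ℝ × ℝ × ℝ) (hx : Int3 x) :
    ¬ Filter.Tendsto (fun n => V^[n] x) Filter.atTop (nhds ((0:ℝ), (1:ℝ), (0:ℝ))) := by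
  intro hT
  have hpos := iter_interior V hV x hx
  have h2 : Filter.Tendsto (fun n => (V^[n] x).2.1) Filter.atTop (nhds 1) :=
    ((continuous_fst.comp continuous_snd).tendsto _).comp hT
  have h1 : Filter.Tendsto (fun n => (V^[n] x).1) Filter.atTop (nhds 0) :=
    (continuous_fst.tendsto _).comp hT
  obtain ⟨N, hN⟩ := Filter.eventually_atTop.mp
    (h2.eventually (eventually_gt_nhds (by norm_num : (1:ℝ)/2 < 1)))
  have hmono : ∀ n, N ≤ n → (V^[N] x).1 ≤ (V^[n] x).1 := by
    intro n hn
    induction n, hn using Nat.le_induction with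
    | base => exact le_refl _
    | succ n hn ih =>
      refine le_trans ih ?_
      rw [Function.iterate_succ_apply', hV]
      obtain ⟨p1, p2, p3, ps⟩ := hpos n
      have := hN n hn
      dsimp only
      nlinarith
  obtain ⟨M, hM⟩ := Filter.eventually_atTop.mp
    (h1.eventually (eventually_lt_nhds (hpos N).1))
  have hle := hmono (max N M) (le_max_left _ _)
  have hlt := hM (max N M) (le_max_right _ _)
  linarith

lemma no_conv_vertex3 (V : ℝ × ℝ × ℝ → ℝ × ℝ × ℝ)
    (hV : ∀ x : ℝ × ℝ × ℝ, V x =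
      (x.1^2 + 2*x.1*x.2.1, x.2.1^2 + 2*x.2.1*x.2.2, x.2.2^2 + 2*x.1*x.2.2))
    (x : ℝ × ℝ × ℝ) (hx : Int3 x) :
    ¬ Filter.Tendsto (fun n => V^[n] x) Filter.atTop (nhds ((0:ℝ), (0:ℝ), (1:ℝ))) := by
  intro hT
  have hpos := iter_interior V hV x hx
  have h3 : Filter.Tendsto (fun n => (V^[n] x).2.2) Filter.atTop (nhds 1) :=
    ((continuous_snd.comp continuous_snd).tendsto _).comp hT
  have h2 : Filter.Tendsto (fun n => (V^[n] x).2.1) Filter.atTop (nhds 0) :=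
    ((continuous_fst.comp continuous_snd).tendsto _).comp hT
  obtain ⟨N, hN⟩ := Filter.eventually_atTop.mp
    (h3.eventually (eventually_gt_nhds (by norm_num : (1:ℝ)/2 < 1)))
  have hmono : ∀ n, N ≤ n → (V^[N] x).2.1 ≤ (V^[n] x).2.1 := by
    intro n hn
    induction n, hn using Nat.le_induction with
    | base => exact le_refl _
    | succ n hn ih =>
      refine le_trans ih ?_
      rw [Function.iterate_succ_apply', hV]
      obtain ⟨p1, p2, p3, ps⟩ := hpos n
      have := hN n hn
      dsimp only
      nlinarith
  obtain ⟨M, hM⟩ := Filter.eventually_atTop.mp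
    (h2.eventually (eventually_lt_nhds (hpos N).2.1))
  have hle := hmono (max N M) (le_max_left _ _)
  have hlt := hM (max N M) (le_max_right _ _)
  linarith

lemma fixed_classify (V : ℝ × ℝ × ℝ → ℝ × ℝ × ℝ)
    (hV : ∀ x : ℝ × ℝ × ℝ, V x =
      (x.1^2 + 2*x.1*x.2.1, x.2.1^2 + 2*x.2.1*x.2.2, x.2.2^2 + 2*x.1*x.2.2))
    (p : ℝ × ℝ × ℝ) (hp : 0 ≤ p.1 ∧ 0 ≤ p.2.1 ∧ 0 ≤ p.2.2 ∧ p.1 + p.2.1 + p.2.2 = 1)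
    (hfix : V p = p) :
    p = ((1:ℝ), (0:ℝ), (0:ℝ)) ∨ p = ((0:ℝ), (1:ℝ), (0:ℝ)) ∨ p = ((0:ℝ), (0:ℝ), (1:ℝ)) ∨
    p = ((1:ℝ)/3, (1:ℝ)/3, (1:ℝ)/3) := by
  obtain ⟨hp1, hp2, hp3, hs⟩ := hp
  rw [hV] at hfix
  have h1 : p.1^2 + 2*p.1*p.2.1 = p.1 := congrArg Prod.fst hfix
  have h2 : p.2.1^2 + 2*p.2.1*p.2.2 = p.2.1 := congrArg (Prod.fst ∘ Prod.snd) hfix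
  have h3 : p.2.2^2 + 2*p.1*p.2.2 = p.2.2 := congrArg (Prod.snd ∘ Prod.snd) hfix
  have e1 : p.1 * (p.2.1 - p.2.2) = 0 := by linear_combination h1 - p.1 * hs
  have e2 : p.2.1 * (p.2.2 - p.1) = 0 := by linear_combination h2 - p.2.1 * hs
  have e3 : p.2.2 * (p.1 - p.2.1) = 0 := by linear_combination h3 - p.2.2 * hs
  have hext : ∀ a b c : ℝ, p.1 = a → p.2.1 = b → p.2.2 = c → p = (a, b, c) := by
    rintro a b c rfl rfl rfl; rfl
  rcases mul_eq_zero.mp e1 with f1 | f1 <;>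
  rcases mul_eq_zero.mp e2 with f2 | f2 <;>
  rcases mul_eq_zero.mp e3 with f3 | f3
  · exact absurd hs (by rw [f1, f2, f3]; norm_num)
  · right; right; left; exact hext _ _ _ f1 f2 (by linarith)
  · right; left; exact hext _ _ _ f1 (by linarith) f3
  · exact absurd hs (by rw [f1]; intro hc; linarith)
  · left; exact hext _ _ _ (by linarith) f2 f3
  · exact absurd hs (by intro hc; linarith)
  · exact absurd hs (by intro hc; linarith)
  · right; right; right; exact hext _ _ _ (by linarith) (by linarith) (by linarith)

theorem counterexample_operator_not_regular
    (V : ℝ × ℝ × ℝ → ℝ × ℝ × ℝ)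
    (hV : ∀ x : ℝ × ℝ × ℝ, V x =
      (x.1^2 + 2*x.1*x.2.1, x.2.1^2 + 2*x.2.1*x.2.2, x.2.2^2 + 2*x.1*x.2.2)) :
    (∀ x : ℝ × ℝ × ℝ, (0 < x.1 ∧ 0 < x.2.1 ∧ 0 < x.2.2 ∧ x.1 + x.2.1 + x.2.2 = 1) →
      x ≠ (1/3, 1/3, 1/3) →
      ∀ p : ℝ × ℝ × ℝ,
        (0 ≤ p.1 ∧ 0 ≤ p.2.1 ∧ 0 ≤ p.2.2 ∧ p.1 + p.2.1 + p.2.2 = 1) → V p = p →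
        ¬ Filter.Tendsto (fun n => V^[n] x) Filter.atTop (nhds p)) ∧
    ¬ (∀ x : ℝ × ℝ × ℝ, (0 ≤ x.1 ∧ 0 ≤ x.2.1 ∧ 0 ≤ x.2.2 ∧ x.1 + x.2.1 + x.2.2 = 1) →
      ∃ p : ℝ × ℝ × ℝ,
        (0 ≤ p.1 ∧ 0 ≤ p.2.1 ∧ 0 ≤ p.2.2 ∧ p.1 + p.2.1 + p.2.2 = 1) ∧ V p = p ∧
        Filter.Tendsto (fun n => V^[n] x) Filter.atTop (nhds p)) := by
  have main : ∀ x : ℝ × ℝ × ℝ, (0 < x.1 ∧ 0 < x.2.1 ∧ 0 < x.2.2 ∧ x.1 + x.2.1 + x.2.2 = 1) →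
      x ≠ (1/3, 1/3, 1/3) →
      ∀ p : ℝ × ℝ × ℝ,
        (0 ≤ p.1 ∧ 0 ≤ p.2.1 ∧ 0 ≤ p.2.2 ∧ p.1 + p.2.1 + p.2.2 = 1) → V p = p →
        ¬ Filter.Tendsto (fun n => V^[n] x) Filter.atTop (nhds p) := by
    intro x hx hne p hp hfix
    rcases fixed_classify V hV p hp hfix with rfl | rfl | rfl | rfl
    · exact no_conv_vertex1 V hV x hx
    · exact no_conv_vertex2 V hV x hx
    · exact no_conv_vertex3 V hV x hx
    · exact no_conv_center V hV x hx hne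
  refine ⟨main, ?_⟩
  intro h
  obtain ⟨p, hp, hfix, hT⟩ := h (1/2, 1/4, 1/4) (by norm_num)
  exact main (1/2, 1/4, 1/4) (by norm_num) (by simp [Prod.ext_iff]) p hp hfix hT
end
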